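/- arXiv:2008.13218 — 10 statements merged into one kernel-verified Lean document; each statement's English description precedes it below -/
import Mathlib

section
/- Let R be a ring with unity and M a maximal subring of R (a subring need not contain 1). Then either 1_R ∈ M, or M is a maximal two-sided ideal of R such that R/M is isomorphic to the field F_p for some prime p. -/
/-- A maximal subring of a unital ring either contains `1`, or is a maximal
two-sided ideal with quotient isomorphic to `ZMod p` for some prime `p`. -/
theorem stmt_0 {R : Type*} [Ring R] (M : NonUnitalSubring R) (hM : IsCoatom M) :
    (1 : R) ∈ M ∨
      ∃ I : TwoSidedIdeal R, (I : Set R) = (M : Set R) ∧ IsCoatom I ∧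
        ∃ p : ℕ, p.Prime ∧ Nonempty (I.ringCon.Quotient ≃+* ZMod p) := by
  by_cases h1 : (1 : R) ∈ M
  · exact Or.inl h1
  right
  -- key: every element of R decomposes as m + (k : R) with m ∈ M, k : ℤ
  have hdec : ∀ r : R, ∃ m ∈ M, ∃ k : ℤ, r = m + (k : R) := by
    set T : NonUnitalSubring R :=
      { carrier := {x | ∃ m ∈ M, ∃ k : ℤ, x = m + (k : R)}
        zero_mem' := ⟨0, M.zero_mem, 0, by simp⟩
        add_mem' := by
          rintro x y ⟨m, hm, k, rfl⟩ ⟨m', hm', k', rfl⟩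
          exact ⟨m + m', M.add_mem hm hm', k + k', by push_cast; abel⟩
        neg_mem' := by
          rintro x ⟨m, hm, k, rfl⟩
          exact ⟨-m, M.neg_mem hm, -k, by push_cast; abel⟩
        mul_mem' := by
          rintro x y ⟨m, hm, k, rfl⟩ ⟨m', hm', k', rfl⟩
          refine ⟨m * m' + (k' : R) * m + (k : R) * m', ?_, k * k', ?_⟩
          · refine M.add_mem (M.add_mem (M.mul_mem hm hm') ?_) ?_
            · simpa [zsmul_eq_mul] using M.zsmul_mem hm k'
            · simpa [zsmul_eq_mul] using M.zsmul_mem hm' k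
          · have hc : m * (k' : R) = (k' : R) * m := ((Int.cast_commute k' m).symm).eq
            push_cast
            rw [add_mul, mul_add, mul_add, hc]
            abel } with hT
    have hMT : M < T := by
      refine lt_of_le_of_ne (fun x hx => ⟨x, hx, 0, by simp⟩) ?_
      intro h
      exact h1 (h ▸ (⟨0, M.zero_mem, 1, by simp⟩ : (1:R) ∈ T))
    have := hM.2 T hMT
    intro r
    have : r ∈ T := this ▸ trivial
    exact this
  -- M is a two-sided ideal
  have hleft : ∀ {x y : R}, y ∈ (M : Set R) → x * y ∈ (M : Set R) := by
    rintro x y hy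
    obtain ⟨m, hm, k, rfl⟩ := hdec x
    rw [add_mul]
    refine M.add_mem (M.mul_mem hm hy) ?_
    simpa [zsmul_eq_mul] using M.zsmul_mem hy k
  have hright : ∀ {x y : R}, x ∈ (M : Set R) → x * y ∈ (M : Set R) := by
    rintro x y hx
    obtain ⟨m, hm, k, rfl⟩ := hdec y
    rw [mul_add]
    refine M.add_mem (M.mul_mem hx hm) ?_
    have : x * (k : R) = (k : R) * x := ((Int.cast_commute k x).symm).eq
    rw [this]
    simpa [zsmul_eq_mul] using M.zsmul_mem hx k
  set I := TwoSidedIdeal.mk' (M : Set R) M.zero_mem (fun {a b} ha hb => M.add_mem ha hb)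
      (fun {a} ha => M.neg_mem ha) hleft hright with hI
  have hIco : (I : Set R) = (M : Set R) := TwoSidedIdeal.coe_mk' _ _ _ _ _ _
  have hImem : ∀ x : R, x ∈ I ↔ x ∈ M := fun x => TwoSidedIdeal.mem_mk' _ _ _ _ _ _ x
  refine ⟨I, hIco, ?_, ?_⟩
  · -- coatom
    constructor
    · intro h
      apply h1
      rw [← hImem, h]
      exact TwoSidedIdeal.mem_top _
    · intro J hJ
      set J' : NonUnitalSubring R :=
        { carrier := (J : Set R)
          zero_mem' := J.zero_mem
          add_mem' := fun ha hb => J.add_mem ha hb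
          neg_mem' := fun ha => J.neg_mem ha
          mul_mem' := fun {a b} _ hb => J.mul_mem_left a b hb } with hJ'
      have hlt : M < J' := by
        rw [← SetLike.coe_ssubset_coe]
        have := (TwoSidedIdeal.lt_iff _ _).mp hJ
        rwa [hIco] at this
      have htop := hM.2 J' hlt
      ext x
      simp only [TwoSidedIdeal.mem_top _, iff_true]
      have : x ∈ J' := htop ▸ trivial
      exact this
  · -- quotient is ZMod p
    set K : Ideal ℤ :=
      { carrier := {k : ℤ | (k : R) ∈ M}
        zero_mem' := by simpa using M.zero_mem
        add_mem' := by
          intro a b ha hb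
          simp only [Set.mem_setOf_eq] at *
          push_cast
          exact M.add_mem ha hb
        smul_mem' := by
          intro c x hx
          simp only [smul_eq_mul, Set.mem_setOf_eq] at *
          push_cast
          rw [← zsmul_eq_mul]
          exact M.zsmul_mem hx c } with hK
    have hKmem : ∀ k : ℤ, k ∈ K ↔ ((k : R) ∈ M) := fun _ => Iff.rfl
    have hKmax : K.IsMaximal := by
      rw [Ideal.isMaximal_def]
      constructor
      · intro h
        apply h1
        have : (1 : ℤ) ∈ K := h ▸ Submodule.mem_top
        simpa using (hKmem 1).mp this
      · intro J hJK
        obtain ⟨j, hjJ, hjK⟩ := SetLike.exists_of_lt hJK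
        set T2 : NonUnitalSubring R :=
          { carrier := {x | ∃ m ∈ M, ∃ k ∈ J, x = m + (k : R)}
            zero_mem' := ⟨0, M.zero_mem, 0, J.zero_mem, by simp⟩
            add_mem' := by
              rintro x y ⟨m, hm, k, hk, rfl⟩ ⟨m', hm', k', hk', rfl⟩
              exact ⟨m + m', M.add_mem hm hm', k + k', J.add_mem hk hk', by push_cast; abel⟩
            neg_mem' := by
              rintro x ⟨m, hm, k, hk, rfl⟩
              exact ⟨-m, M.neg_mem hm, -k, J.neg_mem hk, by push_cast; abel⟩
            mul_mem' := by
              rintro x y ⟨m, hm, k, hk, rfl⟩ ⟨m', hm', k', hk', rfl⟩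
              refine ⟨m * m' + (k' : R) * m + (k : R) * m', ?_, k * k',
                J.mul_mem_left k hk', ?_⟩
              · refine M.add_mem (M.add_mem (M.mul_mem hm hm') ?_) ?_
                · simpa [zsmul_eq_mul] using M.zsmul_mem hm k'
                · simpa [zsmul_eq_mul] using M.zsmul_mem hm' k
              · have hc : m * (k' : R) = (k' : R) * m := ((Int.cast_commute k' m).symm).eq
                push_cast
                rw [add_mul, mul_add, mul_add, hc]
                abel } with hT2
        have hMT2 : M < T2 := by
          refine lt_of_le_of_ne (fun x hx => ⟨x, hx, 0, J.zero_mem, by simp⟩) ?_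
          intro h
          exact hjK ((hKmem j).mpr (h ▸ (⟨0, M.zero_mem, j, hjJ, by simp⟩ : (j : R) ∈ T2)))
        have h1T : (1 : R) ∈ T2 := (hM.2 T2 hMT2) ▸ trivial
        obtain ⟨m, hm, k, hkJ, hEq⟩ := h1T
        have hsub : (1 - k : ℤ) ∈ K := by
          rw [hKmem]
          push_cast
          have : (1 : R) - (k : R) = m := by rw [hEq]; abel
          rw [this]
          exact hm
        have hone : (1 : ℤ) ∈ J := by
          have := J.add_mem (hJK.le hsub) hkJ
          simpa using this
        exact (Ideal.eq_top_iff_one J).mpr hone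
    obtain ⟨g, hg⟩ := Submodule.IsPrincipal.principal K
    have hg0 : g ≠ 0 := by
      intro h
      subst h
      have hbot : K = ⊥ := by rw [hg]; exact Ideal.span_singleton_eq_bot.mpr rfl
      have := (Ideal.isMaximal_def.mp hKmax).2 (Ideal.span {(2 : ℤ)}) ?_
      · have := Ideal.span_singleton_eq_top.mp this
        rw [Int.isUnit_iff] at this
        omega
      · rw [hbot, bot_lt_iff_ne_bot, Ne, Ideal.span_singleton_eq_bot]
        norm_num
    have hgsp : (Ideal.span {g}).IsPrime := by rw [Ideal.span, ← hg]; exact hKmax.isPrime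
    have hgp : Prime g := (Ideal.span_singleton_prime hg0).mp hgsp
    refine ⟨g.natAbs, Int.prime_iff_natAbs_prime.mp hgp, ?_⟩
    set Q := I.ringCon.Quotient
    let f : ℤ →+* Q := Int.castRingHom Q
    have hker : RingHom.ker f = K := by
      ext k
      rw [RingHom.mem_ker]
      have h1 : f k = I.ringCon.mk' ((k : R)) := (map_intCast I.ringCon.mk' k).symm
      have h2 : (0 : Q) = I.ringCon.mk' 0 := (map_zero _).symm
      rw [h1, h2, hKmem]
      constructor
      · intro h
        have := (RingCon.eq I.ringCon).mp h
        rw [TwoSidedIdeal.rel_iff, sub_zero, hImem] at this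
        exact this
      · intro h
        refine (RingCon.eq I.ringCon).mpr ?_
        rw [TwoSidedIdeal.rel_iff, sub_zero, hImem]
        exact h
    have hsurj : Function.Surjective f := by
      intro q
      induction q using Quotient.ind with
      | _ r =>
        obtain ⟨m, hm, k, rfl⟩ := hdec r
        refine ⟨k, ?_⟩
        have h1 : f k = I.ringCon.mk' ((k : R)) := (map_intCast I.ringCon.mk' k).symm
        rw [h1]
        refine (RingCon.eq I.ringCon).mpr ?_
        rw [TwoSidedIdeal.rel_iff, hImem]
        have : (k : R) - (m + (k : R)) = -m := by abel
        rw [this]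
        exact M.neg_mem hm
    have e1 : ℤ ⧸ RingHom.ker f ≃+* Q := RingHom.quotientKerEquivOfSurjective hsurj
    have e3 : ℤ ⧸ Ideal.span {g} ≃+* ZMod g.natAbs := Int.quotientSpanEquivZMod g
    exact ⟨(e1.symm.trans ((Ideal.quotEquivOfEq (hker.trans hg)).trans e3))⟩
end

section
/- Let R be a finite ring with unity of characteristic p^n for a prime p. Then every maximal subring M of R contains pR. -/
/-- In a finite unital ring of characteristic `p^n`, every maximal subring
contains `pR`. -/
theorem stmt_4 {R : Type*} [Ring R] [Finite R] (p n : ℕ) (hp : p.Prime)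
    [CharP R (p ^ n)] (M : NonUnitalSubring R) (hM : IsCoatom M) :
    ∀ r : R, (p : R) * r ∈ M := by
  intro r
  by_contra hpr
  -- The subring M + pR
  set T : NonUnitalSubring R :=
    { carrier := {x | ∃ m ∈ M, ∃ s : R, x = m + (p : R) * s}
      zero_mem' := ⟨0, M.zero_mem, 0, by simp⟩
      add_mem' := by
        rintro x y ⟨m, hm, s, rfl⟩ ⟨m', hm', s', rfl⟩
        exact ⟨m + m', M.add_mem hm hm', s + s', by noncomm_ring⟩
      neg_mem' := by
        rintro x ⟨m, hm, s, rfl⟩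
        exact ⟨-m, M.neg_mem hm, -s, by noncomm_ring⟩
      mul_mem' := by
        rintro x y ⟨m, hm, s, rfl⟩ ⟨m', hm', s', rfl⟩
        refine ⟨m * m', M.mul_mem hm hm', m * s' + s * m' + s * ((p : R) * s'), ?_⟩
        have h1 : m * ((p : R) * s') = (p : R) * (m * s') :=
          by rw [← mul_assoc, ← (Nat.cast_commute p m).eq, mul_assoc]
        have h2 : ((p : R) * s) * m' = (p : R) * (s * m') := by rw [mul_assoc]
        have h3 : ((p : R) * s) * ((p : R) * s') = (p : R) * (s * ((p : R) * s')) := by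
          rw [mul_assoc]
        calc (m + (p : R) * s) * (m' + (p : R) * s')
            = m * m' + (m * ((p : R) * s') + ((p : R) * s) * m'
              + ((p : R) * s) * ((p : R) * s')) := by noncomm_ring
          _ = m * m' + (p : R) * (m * s' + s * m' + s * ((p : R) * s')) := by
              rw [h1, h2, h3]; noncomm_ring }
  have hMT : M < T := by
    constructor
    · intro x hx
      exact ⟨x, hx, 0, by simp⟩
    · intro hle
      exact hpr (hle ⟨0, M.zero_mem, r, by simp⟩)
  have hT : T = ⊤ := hM.2 T hMT
  have key : ∀ k : ℕ, ∀ x : R, ∃ m ∈ M, ∃ s : R, x = m + (p : R) ^ k * s := by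
    intro k
    induction k with
    | zero => intro x; exact ⟨0, M.zero_mem, x, by simp⟩
    | succ k ih =>
      intro x
      obtain ⟨m, hm, s, rfl⟩ := ih x
      have hs : s ∈ T := hT ▸ NonUnitalSubring.mem_top s
      obtain ⟨m', hm', s', rfl⟩ := hs
      have hpkm : (p : R) ^ k * m' ∈ M := by
        have : (p : R) ^ k * m' = (p ^ k) • m' := by
          rw [nsmul_eq_mul, Nat.cast_pow]
        rw [this]
        exact nsmul_mem hm' _
      exact ⟨m + (p : R) ^ k * m', M.add_mem hm hpkm, s', by rw [mul_add, ← add_assoc, ← mul_assoc, ← pow_succ]⟩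
  have : M = ⊤ := by
    rw [eq_top_iff]
    intro x _
    obtain ⟨m, hm, s, hx⟩ := key n x
    have hpn : (p : R) ^ n = 0 := by
      rw [← Nat.cast_pow]
      exact CharP.cast_eq_zero R (p ^ n)
    rw [hx, hpn, zero_mul, add_zero]
    exact hm
  exact hM.1 this
end

section
/- Let R be a finite ring with unity of characteristic p^n for a prime p. Then σ(R) = σ(R/pR), i.e., R is coverable if and only if R/pR is coverable, and the minimal sizes of covers agree. -/
/-- A cover of a ring by proper subrings (subrings need not contain `1`). -/
def IsSubringCover {R : Type*} [Ring R] (C : Finset (NonUnitalSubring R)) : Prop :=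
  (∀ S ∈ C, S ≠ ⊤) ∧ ∀ r : R, ∃ S ∈ C, r ∈ S

/-- The covering number of a ring: the least size of a cover by proper subrings,
`⊤` if no (finite) cover exists. -/
noncomputable def ringSigma (R : Type*) [Ring R] : ℕ∞ :=
  sInf {n : ℕ∞ | ∃ C : Finset (NonUnitalSubring R), IsSubringCover C ∧ (C.card : ℕ∞) = n}

/-- If `S + pR = R` and `p^n = 0` in `R`, then `S = R`. -/
lemma key_lemma {R : Type*} [Ring R] (p n : ℕ) (hpn : ((p ^ n : ℕ) : R) = 0)
    (S : NonUnitalSubring R)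
    (hcov : ∀ x : R, ∃ s ∈ S, ∃ t : R, x = s + (p : R) * t) : S = ⊤ := by
  have main : ∀ k : ℕ, ∀ x : R, ∃ s ∈ S, ∃ t : R, x = s + (p : R) ^ k * t := by
    intro k
    induction k with
    | zero => intro x; exact ⟨0, S.zero_mem, x, by simp⟩
    | succ k ih =>
      intro x
      obtain ⟨s, hs, t, ht⟩ := ih x
      obtain ⟨s', hs', t', ht'⟩ := hcov t
      refine ⟨s + (p : R) ^ k * s', S.add_mem hs ?_, t', by rw [ht, ht', mul_add, ← mul_assoc, ← pow_succ, ← add_assoc]⟩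
      have : ((p : R)) ^ k * s' = (p ^ k : ℕ) • s' := by
        rw [nsmul_eq_mul, Nat.cast_pow]
      rw [this]
      exact nsmul_mem hs' _
  rw [eq_top_iff]
  rintro x -
  obtain ⟨s, hs, t, ht⟩ := main n x
  have : ((p : R)) ^ n = 0 := by rw [← Nat.cast_pow, hpn]
  rw [ht, this, zero_mul, add_zero]
  exact hs

/-- For a finite unital ring of characteristic `p^n`, `σ(R) = σ(R/pR)`
(in particular, `R` is coverable iff `R/pR` is). -/
theorem stmt_5 {R : Type*} [Ring R] [Finite R] (p n : ℕ) (hp : p.Prime)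
    [CharP R (p ^ n)] (I : TwoSidedIdeal R)
    (hI : ∀ x : R, x ∈ I ↔ ∃ r : R, x = (p : R) * r) :
    ringSigma R = ringSigma I.ringCon.Quotient := by
  classical
  set π : R →+* I.ringCon.Quotient := I.ringCon.mk' with hπ
  have hsurj : Function.Surjective π := fun q => Quotient.inductionOn' q fun r => ⟨r, rfl⟩
  have hker : ∀ x y : R, π x = π y ↔ x - y ∈ I := by
    intro x y
    rw [show π x = (x : I.ringCon.Quotient) from rfl, show π y = (y : I.ringCon.Quotient) from rfl,
      RingCon.eq, TwoSidedIdeal.rel_iff]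
  have hpn : ((p ^ n : ℕ) : R) = 0 := CharP.cast_eq_zero R (p ^ n)
  apply le_antisymm
  · -- σ(R) ≤ σ(R/pR): pull back a cover
    apply le_sInf
    rintro b ⟨C, ⟨hproper, hcover⟩, rfl⟩
    set C' := C.image (NonUnitalSubring.comap π) with hC'
    have hcov' : IsSubringCover C' := by
      constructor
      · intro T hT
        rw [hC', Finset.mem_image] at hT
        obtain ⟨S, hS, rfl⟩ := hT
        intro htop
        apply hproper S hS
        rw [eq_top_iff]
        rintro q -
        obtain ⟨r, rfl⟩ := hsurj q
        have : r ∈ NonUnitalSubring.comap π S := htop ▸ trivial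
        exact this
      · intro r
        obtain ⟨S, hS, hr⟩ := hcover (π r)
        exact ⟨NonUnitalSubring.comap π S, Finset.mem_image_of_mem _ hS, hr⟩
    calc (ringSigma R : ℕ∞) ≤ (C'.card : ℕ∞) := sInf_le ⟨C', hcov', rfl⟩
      _ ≤ (C.card : ℕ∞) := by exact_mod_cast Finset.card_image_le
  · -- σ(R/pR) ≤ σ(R): push forward a cover
    apply le_sInf
    rintro b ⟨C, ⟨hproper, hcover⟩, rfl⟩
    set C' := C.image (NonUnitalSubring.map π) with hC'
    have hcov' : IsSubringCover C' := by
      constructor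
      · intro T hT
        rw [hC', Finset.mem_image] at hT
        obtain ⟨S, hS, rfl⟩ := hT
        intro htop
        apply hproper S hS
        apply key_lemma p n hpn
        intro x
        have : π x ∈ NonUnitalSubring.map π S := htop ▸ trivial
        obtain ⟨s, hs, hsx⟩ := this
        have hxI : x - s ∈ I := by rw [← hker]; exact hsx.symm
        obtain ⟨t, ht⟩ := (hI (x - s)).mp hxI
        exact ⟨s, hs, t, by rw [← ht]; abel⟩
      · intro q
        obtain ⟨r, rfl⟩ := hsurj q
        obtain ⟨S, hS, hr⟩ := hcover r
        exact ⟨NonUnitalSubring.map π S, Finset.mem_image_of_mem _ hS, ⟨r, hr, rfl⟩⟩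
    calc (ringSigma I.ringCon.Quotient : ℕ∞) ≤ (C'.card : ℕ∞) := sInf_le ⟨C', hcov', rfl⟩
      _ ≤ (C.card : ℕ∞) := by exact_mod_cast Finset.card_image_le
end

section
/- Let R be a finite ring with unity of characteristic p, and let T be a maximal subring of R. Then T ∩ J(R) is a two-sided ideal of R, where J(R) is the Jacobson radical of R. -/
/-!
Let `A = T ∩ J`. The elements `r` with `r A ⊆ A` and `A r ⊆ A` form a subring containing `T`, so by
maximality it is either all of `R`, in which case `A` is an ideal, or `T` itself. The second case is
impossible: since `R` is finite, `J` is nilpotent, and we may argue by descending induction on `m` that `J ^ m ⊆ T`.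
Indeed, if `J ^ (m + 1) ⊆ T` then for `x ∈ J ^ m` and `a ∈ A ⊆ J` both `x a` and `a x` lie in
`J ^ (m + 1) ∩ J ⊆ A`, so `x` belongs to the subring above, which is `T`. For `m = 0` this gives
`T = R`.
-/

namespace AddSubgroup

variable {R : Type*} [Ring R]

def idealizer (A : AddSubgroup R) : Subring R where
  carrier := {r | ∀ a ∈ A, r * a ∈ A ∧ a * r ∈ A}
  one_mem' a ha := by simpa using ha
  mul_mem' {r s} hr hs a ha := by
    refine ⟨?_, ?_⟩
    · rw [mul_assoc]; exact (hr _ (hs a ha).1).1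
    · rw [← mul_assoc]; exact (hs _ (hr a ha).2).2
  zero_mem' a _ := by simp [A.zero_mem]
  add_mem' {r s} hr hs a ha := by
    rw [add_mul, mul_add]
    exact ⟨A.add_mem (hr a ha).1 (hs a ha).1, A.add_mem (hr a ha).2 (hs a ha).2⟩
  neg_mem' {r} hr a ha := by
    rw [neg_mul, mul_neg]
    exact ⟨A.neg_mem (hr a ha).1, A.neg_mem (hr a ha).2⟩

theorem mem_idealizer {A : AddSubgroup R} {r : R} :
    r ∈ A.idealizer ↔ ∀ a ∈ A, r * a ∈ A ∧ a * r ∈ A :=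
  Iff.rfl

theorem exists_twoSidedIdeal_of_idealizer_eq_top {A : AddSubgroup R} (h : A.idealizer = ⊤) :
    ∃ I : TwoSidedIdeal R, (I : Set R) = A := by
  have hA (r : R) : ∀ a ∈ A, r * a ∈ A ∧ a * r ∈ A := mem_idealizer.mp (h ▸ Subring.mem_top r)
  exact ⟨TwoSidedIdeal.mk' A A.zero_mem A.add_mem A.neg_mem
    (fun {x y} hy => (hA x y hy).1) (fun {x y} hx => (hA y x hx).2), TwoSidedIdeal.coe_mk' ..⟩

end AddSubgroup

namespace NonUnitalSubring

variable {R : Type*} [Ring R] (T : NonUnitalSubring R) (J : Ideal R) [J.IsTwoSided]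

abbrev interIdeal : AddSubgroup R :=
  T.toAddSubgroup ⊓ J.toAddSubgroup

theorem le_idealizer_interIdeal : T ≤ (T.interIdeal J).idealizer.toNonUnitalSubring :=
  fun t ht _ ⟨haT, haJ⟩ =>
    ⟨⟨T.mul_mem ht haT, J.mul_mem_left t haJ⟩, ⟨T.mul_mem haT ht, J.mul_mem_right t haJ⟩⟩

variable {T J}

theorem pow_subset_of_pow_succ_subset (hT : ((T.interIdeal J).idealizer : Set R) ⊆ T) {m : ℕ}
    (hm : ((J ^ (m + 1) : Ideal R) : Set R) ⊆ T) : ((J ^ m : Ideal R) : Set R) ⊆ T := by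
  refine fun x hx => hT fun _ ⟨_, haJ⟩ => ⟨⟨?_, J.mul_mem_left x haJ⟩, ⟨?_, J.mul_mem_right x haJ⟩⟩
  · exact hm (Submodule.pow_succ J ▸ Ideal.mul_mem_mul hx haJ)
  · exact hm (Ideal.IsTwoSided.pow_succ (I := J) m ▸ Ideal.mul_mem_mul haJ hx)

theorem eq_top_of_idealizer_interIdeal_subset (hJ : IsNilpotent J)
    (hT : ((T.interIdeal J).idealizer : Set R) ⊆ T) : T = ⊤ := by
  obtain ⟨n, hn⟩ := hJ
  have hzero : ((J ^ n : Ideal R) : Set R) ⊆ T := by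
    intro x hx
    rw [hn, Ideal.zero_eq_bot, SetLike.mem_coe, Ideal.mem_bot] at hx
    exact hx ▸ T.zero_mem
  have hone : ((J ^ 0 : Ideal R) : Set R) ⊆ T :=
    Nat.decreasingInduction (fun _ _ => pow_subset_of_pow_succ_subset hT) hzero (Nat.zero_le n)
  exact (eq_top_iff' T).mpr fun x => hone (by rw [Submodule.pow_zero, Ideal.one_eq_top]; trivial)

end NonUnitalSubring

open NonUnitalSubring AddSubgroup in
theorem stmt_7_general {R : Type*} [Ring R] [Finite R]
    (T : NonUnitalSubring R) (hT : IsCoatom T) :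
    ∃ I : TwoSidedIdeal R,
      (I : Set R) = (T : Set R) ∩ (Ideal.jacobson (⊥ : Ideal R) : Set R) := by
  set J := Ideal.jacobson (⊥ : Ideal R)
  rcases hT.le_iff.mp (T.le_idealizer_interIdeal J) with htop | heq
  · exact exists_twoSidedIdeal_of_idealizer_eq_top
      ((Subring.eq_top_iff' _).mpr ((NonUnitalSubring.eq_top_iff' _).mp htop))
  · exact absurd (eq_top_of_idealizer_interIdeal_subset IsArtinianRing.isNilpotent_jacobson_bot
      fun r hr => heq ▸ hr) hT.1

/-- In a finite unital ring of characteristic `p`, the intersection of a maximal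
subring with the Jacobson radical is a two-sided ideal of `R`. -/
theorem stmt_7 {R : Type*} [Ring R] [Finite R] (p : ℕ) (hp : p.Prime) [CharP R p]
    (T : NonUnitalSubring R) (hT : IsCoatom T) :
    ∃ I : TwoSidedIdeal R,
      (I : Set R) = (T : Set R) ∩ (Ideal.jacobson (⊥ : Ideal R) : Set R) :=
  stmt_7_general T hT
end

section
/- Let V be a finite-dimensional vector space over a finite field F. Then V can be written as a union of finitely many proper subspaces if and only if dim V ≥ 2, and when dim V ≥ 2, the minimal number of proper subspaces needed to cover V is |F| + 1. -/
/-! Let `q = |F|` and count nonzero vectors: a proper subspace has at most `|V| / q` elements,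
so `n ≤ q` proper subspaces contain at most `q (|V| / q - 1) < |V| - 1` nonzero vectors.
Conversely, the `q + 1` lines of `F²` cover it, and pulling them back along a surjection
`V → F²` covers `V`. In dimension at most one the only proper subspace is `0`. -/

/-- A cover of a vector space by proper subspaces. -/
def IsSubspaceCover (F V : Type*) [Field F] [AddCommGroup V] [Module F V]
    (C : Finset (Submodule F V)) : Prop :=
  (∀ W ∈ C, W ≠ ⊤) ∧ ∀ v : V, ∃ W ∈ C, v ∈ W

open Module
open scoped LinearAlgebra.Projectivization

section

variable {F V : Type*} [Field F] [AddCommGroup V] [Module F V]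

theorem Submodule.card_field_mul_card_le_of_ne_top [FiniteDimensional F V] {W : Submodule F V}
    (hW : W ≠ ⊤) : Nat.card F * Nat.card W ≤ Nat.card V := by
  rcases (Nat.card F).eq_zero_or_pos with hF | hF
  · simp [hF]
  rw [natCard_eq_pow_finrank (K := F) (V := W), natCard_eq_pow_finrank (K := F) (V := V),
    ← pow_succ']
  exact Nat.pow_le_pow_right hF (Submodule.finrank_lt hW)

theorem Submodule.card_sub_one_le_sum_of_forall_exists_mem [Finite V]
    (C : Finset (Submodule F V)) (hC : ∀ v : V, ∃ W ∈ C, v ∈ W) :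
    Nat.card V - 1 ≤ ∑ W ∈ C, (Nat.card W - 1) := by
  have hcover : (Set.univ \ {0} : Set V) ⊆ ⋃ W ∈ C, ((W : Set V) \ {0}) := by
    rintro v ⟨-, hv⟩
    obtain ⟨W, hWC, hvW⟩ := hC v
    exact Set.mem_biUnion hWC ⟨hvW, hv⟩
  calc Nat.card V - 1 = (Set.univ \ {0} : Set V).ncard := by simp
    _ ≤ (⋃ W ∈ C, ((W : Set V) \ {0})).ncard := Set.ncard_le_ncard hcover
    _ ≤ ∑ W ∈ C, ((W : Set V) \ {0}).ncard := C.set_ncard_biUnion_le _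
    _ = ∑ W ∈ C, (Nat.card W - 1) :=
      Finset.sum_congr rfl fun W _ => Set.ncard_sdiff_singleton_of_mem W.zero_mem

namespace IsSubspaceCover

theorem two_le_finrank [FiniteDimensional F V] {C : Finset (Submodule F V)}
    (hC : IsSubspaceCover F V C) : 2 ≤ finrank F V := by
  obtain ⟨W, hWC, -⟩ := hC.2 0
  obtain ⟨v, hvW⟩ := SetLike.exists_not_mem_of_ne_top W (hC.1 W hWC)
  obtain ⟨W', hW'C, hvW'⟩ := hC.2 v
  by_contra! hV
  have hW' : W' = ⊥ := by
    have := Submodule.finrank_lt (hC.1 W' hW'C)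
    exact Submodule.finrank_eq_zero.1 (by omega)
  rw [hW', Submodule.mem_bot] at hvW'
  exact hvW (hvW' ▸ W.zero_mem)

theorem card_field_lt_card [Finite F] [FiniteDimensional F V] {C : Finset (Submodule F V)}
    (hC : IsSubspaceCover F V C) : Nat.card F < C.card := by
  have : Finite V := Module.finite_of_finite F
  set q := Nat.card F
  set N := Nat.card V
  have hq : 1 < q := Finite.one_lt_card
  have hW : ∀ W ∈ C, q * (Nat.card W - 1) ≤ N - q := fun W hW => by
    have : q * Nat.card W ≤ N := Submodule.card_field_mul_card_le_of_ne_top (hC.1 W hW)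
    rw [Nat.mul_sub_one]
    omega
  have hqN : q ≤ N := by
    obtain ⟨W, hWC, -⟩ := hC.2 0
    exact (Nat.le_mul_of_pos_right q Nat.card_pos).trans
      (Submodule.card_field_mul_card_le_of_ne_top (hC.1 W hWC))
  by_contra! hCq
  have : q * (N - 1) ≤ q * (N - q) := calc
    q * (N - 1) ≤ q * ∑ W ∈ C, (Nat.card W - 1) :=
      Nat.mul_le_mul_left q (Submodule.card_sub_one_le_sum_of_forall_exists_mem C hC.2)
    _ = ∑ W ∈ C, q * (Nat.card W - 1) := Finset.mul_sum _ _ _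
    _ ≤ ∑ W ∈ C, (N - q) := Finset.sum_le_sum hW
    _ = C.card * (N - q) := by rw [Finset.sum_const, smul_eq_mul]
    _ ≤ q * (N - q) := Nat.mul_le_mul_right _ hCq
  have := Nat.le_of_mul_le_mul_left this (by omega)
  omega

theorem comap {U : Type*} [AddCommGroup U] [Module F U] {C : Finset (Submodule F U)}
    (hC : IsSubspaceCover F U C) {f : V →ₗ[F] U} (hf : Function.Surjective f) :
    IsSubspaceCover F V
      (C.map ⟨Submodule.comap f, Submodule.comap_injective_of_surjective hf⟩) := by
  refine ⟨?_, fun v => ?_⟩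
  · simp only [Finset.mem_map, Function.Embedding.coeFn_mk]
    rintro _ ⟨W, hWC, rfl⟩ htop
    apply hC.1 W hWC
    rw [← Submodule.map_comap_eq_of_surjective hf W, htop, Submodule.map_top,
      LinearMap.range_eq_top.2 hf]
  · obtain ⟨W, hWC, hW⟩ := hC.2 (f v)
    exact ⟨W.comap f, Finset.mem_map_of_mem _ hWC, hW⟩

end IsSubspaceCover

theorem isSubspaceCover_projectivization_submodule [Fintype (ℙ F V)] (hV : 1 < finrank F V) :
    IsSubspaceCover F V
      (Finset.univ.map ⟨Projectivization.submodule, Projectivization.submodule_injective⟩) := by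
  refine ⟨?_, fun v => ?_⟩
  · simp only [Finset.mem_map, Finset.mem_univ, true_and, Function.Embedding.coeFn_mk]
    rintro _ ⟨p, rfl⟩ htop
    have := p.finrank_submodule
    rw [htop, finrank_top] at this
    omega
  · have : Nontrivial V := nontrivial_of_finrank_pos (R := F) (by omega)
    by_cases hv : v = 0
    · obtain ⟨w, hw⟩ := exists_ne (0 : V)
      exact ⟨_, Finset.mem_map_of_mem _ (Finset.mem_univ (Projectivization.mk F w hw)),
        hv ▸ Submodule.zero_mem _⟩
    · exact ⟨_, Finset.mem_map_of_mem _ (Finset.mem_univ (Projectivization.mk F v hv)),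
        by simp [Submodule.mem_span_singleton_self]⟩

theorem exists_isSubspaceCover_card_eq [Finite F] [FiniteDimensional F V]
    (hV : 2 ≤ finrank F V) :
    ∃ C : Finset (Submodule F V), IsSubspaceCover F V C ∧ C.card = Nat.card F + 1 := by
  let f : V →ₗ[F] Fin 2 → F :=
    LinearMap.funLeft F F (Fin.castLE hV) ∘ₗ (finBasis F V).equivFun.toLinearMap
  have hf : Function.Surjective f :=
    (LinearMap.funLeft_surjective_of_injective F F _ (Fin.castLE_injective hV)).comp
      (finBasis F V).equivFun.surjective
  have : Fintype (ℙ F (Fin 2 → F)) := Fintype.ofFinite _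
  refine ⟨_, (isSubspaceCover_projectivization_submodule (by simp)).comap hf, ?_⟩
  rw [Finset.card_map, Finset.card_map, Finset.card_univ, ← Nat.card_eq_fintype_card,
    Projectivization.card_of_finrank_two F _ (by simp)]

end

/-- A finite-dimensional vector space over a finite field is a finite union of
proper subspaces iff its dimension is at least `2`, in which case the minimal
number of proper subspaces needed is `|F| + 1`. -/
theorem stmt_10 (F V : Type*) [Field F] [Fintype F] [AddCommGroup V] [Module F V]
    [FiniteDimensional F V] :
    ((∃ C : Finset (Submodule F V), IsSubspaceCover F V C) ↔ 2 ≤ Module.finrank F V) ∧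
      (2 ≤ Module.finrank F V →
        IsLeast {n : ℕ | ∃ C : Finset (Submodule F V), IsSubspaceCover F V C ∧ C.card = n}
          (Fintype.card F + 1)) := by
  rw [← Nat.card_eq_fintype_card]
  refine ⟨⟨fun ⟨C, hC⟩ => hC.two_le_finrank, fun hV => ?_⟩, fun hV => ⟨?_, ?_⟩⟩
  · obtain ⟨C, hC, -⟩ := exists_isSubspaceCover_card_eq hV
    exact ⟨C, hC⟩
  · exact exists_isSubspaceCover_card_eq hV
  · rintro n ⟨C, hC, rfl⟩
    exact hC.card_field_lt_card
end

section
/- Let R be a finite commutative ring of characteristic p with Jacobson radical J satisfying J² = {0}, and let S be a semisimple subring with R = S ⊕ J, where S = F₁ ⊕ ⋯ ⊕ F_n is a direct sum of finite fields with identities e₁,…,e_n. Then for any ideal I of R contained in J: (1) each e_iI is an ideal of R and I = ⊕_{i=1}^n e_iI; (2) there exists an ideal Ī of R with J = I ⊕ Ī. -/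
/-!
The `e i` are the images of the standard idempotents of `∏ i, F i` under a ring homomorphism, so
they form a complete family of orthogonal idempotents; this gives the decomposition of `I`.
For the complement: since `J² = 0`, the radical `J` is an `R ⧸ J`-module, and `R ⧸ J` is
semisimple because `R` is Artinian. Hence `J` is a semisimple `R`-module, and every submodule of it,
in particular the ideal `I`, has a complement inside `J`.
-/

theorem Module.IsTorsionBySet.isSemisimpleModule {R M : Type*} [Ring R] [AddCommGroup M]
    [Module R M] {A : Ideal R} [A.IsTwoSided] [IsSemisimpleRing (R ⧸ A)]
    (h : Module.IsTorsionBySet R M A) : IsSemisimpleModule R M :=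
  letI := h.module
  h.isSemisimpleModule_iff.mp inferInstance

theorem Ideal.isSemisimpleModule_jacobson_bot {R : Type*} [Ring R] [IsArtinianRing R]
    (h : ∀ x ∈ jacobson (⊥ : Ideal R), ∀ y ∈ jacobson (⊥ : Ideal R), x * y = 0) :
    IsSemisimpleModule R (jacobson (⊥ : Ideal R)) := by
  rw [jacobson_bot] at h ⊢
  exact Module.IsTorsionBySet.isSemisimpleModule (A := Ring.jacobson R)
    fun x a ↦ Subtype.ext (h a a.2 x x.2)

theorem Submodule.exists_inf_eq_bot_sup_eq_of_le {R M : Type*} [Ring R] [AddCommGroup M]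
    [Module R M] {N P : Submodule R M} [IsSemisimpleModule R N] (hPN : P ≤ N) :
    ∃ Q ≤ N, P ⊓ Q = ⊥ ∧ P ⊔ Q = N := by
  have : ComplementedLattice (Set.Iic N) := N.mapIic.complementedLattice_iff.mp inferInstance
  obtain ⟨⟨Q, hQN⟩, hPQ⟩ := ComplementedLattice.exists_isCompl (⟨P, hPN⟩ : Set.Iic N)
  exact ⟨Q, hQN, congrArg Subtype.val hPQ.inf_eq_bot, congrArg Subtype.val hPQ.sup_eq_top⟩

theorem Ideal.exists_coe_eq_image_mul {R : Type*} [CommSemiring R] (a : R) (I : Ideal R) :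
    ∃ E : Ideal R, (E : Set R) = (a * ·) '' I :=
  ⟨Submodule.map (LinearMap.mulLeft R a) I, Submodule.map_coe _ _⟩

theorem OrthogonalIdempotents.mul_eq_zero_of_mul_eq {R I : Type*} [Semiring R] {e : I → R}
    (he : OrthogonalIdempotents e) {i j : I} (hij : i ≠ j) {x y : R} (h : e i * x = e j * y) :
    e i * x = 0 :=
  calc e i * x = e i * (e j * y) := by rw [← h, ← mul_assoc, (he.idem i).eq]
    _ = 0 := by rw [← mul_assoc, he.ortho hij, zero_mul]

theorem CompleteOrthogonalIdempotents.sum_mul {R I : Type*} [Semiring R] [Fintype I] {e : I → R}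
    (he : CompleteOrthogonalIdempotents e) (x : R) : ∑ i, e i * x = x := by
  rw [← Finset.sum_mul, he.complete, one_mul]

theorem stmt_11_general {R : Type*} [CommRing R] [Finite R]
    (hJ2 : ∀ x ∈ Ideal.jacobson (⊥ : Ideal R), ∀ y ∈ Ideal.jacobson (⊥ : Ideal R), x * y = 0)
    (S : Subring R)
    (n : ℕ) (F : Fin n → Type*) [∀ i, Field (F i)]
    (iso : S ≃+* ∀ i, F i) (e : Fin n → R)
    (he : ∀ i, e i = (iso.symm (Pi.single i 1) : R))
    (I : Ideal R) (hI : I ≤ Ideal.jacobson (⊥ : Ideal R)) :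
    (∀ i, ∃ Ei : Ideal R, (Ei : Set R) = (fun x => e i * x) '' (I : Set R)) ∧
      (∀ x ∈ I, x = ∑ i, e i * x) ∧
      (∀ i j, i ≠ j → ∀ x ∈ I, ∀ y ∈ I, e i * x = e j * y → e i * x = 0) ∧
      (∃ Ibar : Ideal R, Ibar ≤ Ideal.jacobson (⊥ : Ideal R) ∧
        I ⊓ Ibar = ⊥ ∧ I ⊔ Ibar = Ideal.jacobson (⊥ : Ideal R)) := by
  have he' : CompleteOrthogonalIdempotents e := by
    convert (CompleteOrthogonalIdempotents.single F).map (S.subtype.comp iso.symm.toRingHom)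
    exact funext he
  have := Ideal.isSemisimpleModule_jacobson_bot hJ2
  obtain ⟨Ibar, hIbar, hinf, hsup⟩ := Submodule.exists_inf_eq_bot_sup_eq_of_le hI
  exact ⟨fun i ↦ Ideal.exists_coe_eq_image_mul (e i) I, fun x _ ↦ (he'.sum_mul x).symm,
    fun _ _ hij _ _ _ _ ↦ he'.toOrthogonalIdempotents.mul_eq_zero_of_mul_eq hij,
    Ibar, hIbar, hinf, hsup⟩

/-- Subideal decomposition: let `R` be a finite commutative ring of characteristic
`p` with Jacobson radical `J` satisfying `J² = 0`, and let `S` be a semisimple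
complement of `J` isomorphic to a direct product of finite fields `F i`, with
`e i` the image in `R` of the `i`-th primitive idempotent.  Then for every ideal
`I ≤ J`: each `e i * I` is an ideal of `R`, `I` is the (internal direct) sum of
the `e i * I`, and `I` has an ideal complement in `J`. -/
theorem stmt_11 {R : Type*} [CommRing R] [Finite R] (p : ℕ) (hp : p.Prime) [CharP R p]
    (hJ2 : ∀ x ∈ Ideal.jacobson (⊥ : Ideal R), ∀ y ∈ Ideal.jacobson (⊥ : Ideal R), x * y = 0)
    (S : Subring R)
    (hdisj : ∀ x ∈ S, x ∈ Ideal.jacobson (⊥ : Ideal R) → x = 0)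
    (hsum : ∀ r : R, ∃ s ∈ S, r - s ∈ Ideal.jacobson (⊥ : Ideal R))
    (n : ℕ) (F : Fin n → Type*) [∀ i, Field (F i)] [∀ i, Fintype (F i)]
    (iso : S ≃+* ∀ i, F i) (e : Fin n → R)
    (he : ∀ i, e i = (iso.symm (Pi.single i 1) : R))
    (I : Ideal R) (hI : I ≤ Ideal.jacobson (⊥ : Ideal R)) :
    (∀ i, ∃ Ei : Ideal R, (Ei : Set R) = (fun x => e i * x) '' (I : Set R)) ∧
      (∀ x ∈ I, x = ∑ i, e i * x) ∧
      (∀ i j, i ≠ j → ∀ x ∈ I, ∀ y ∈ I, e i * x = e j * y → e i * x = 0) ∧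
      (∃ Ibar : Ideal R, Ibar ≤ Ideal.jacobson (⊥ : Ideal R) ∧
        I ⊓ Ibar = ⊥ ∧ I ⊔ Ibar = Ideal.jacobson (⊥ : Ideal R)) :=
  stmt_11_general hJ2 S n F iso e he I hI
end

section
/- Let R be a finite commutative ring of characteristic p with Jacobson radical J satisfying J² = {0}, write R = S ⊕ J with S = F₁ ⊕ ⋯ ⊕ F_n a product of finite fields, e_i = 1_{F_i}, Λ = {i : e_iJ ≠ 0}, d_i = dim_{F_i}(e_iJ), and Λ₂ = {i ∈ Λ : d_i ≥ 2}. Then J is a union of finitely many proper R-subideals if and only if Λ₂ ≠ ∅; moreover, if Λ₂ = ∅ then J is generated by a single element as an R-module. -/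
/-- A cover of the ideal `J` by proper subideals of `R`. -/
def IsSubidealCover {R : Type*} [CommRing R] (J : Ideal R) (C : Finset (Ideal R)) : Prop :=
  (∀ I ∈ C, I ≤ J ∧ I ≠ J) ∧ ∀ x ∈ J, ∃ I ∈ C, x ∈ I

/-- In the setting `R = S ⊕ J`, `J² = 0`, with `S ≅ F₁ × ⋯ × Fₙ` a product of finite
fields with idempotents `e i`, the condition `i ∈ Λ₂` (i.e. `dim_{F i} (e i J) ≥ 2`)
is witnessed by two elements of `e i J` neither of which is a scalar multiple of the
other. -/
def Lam2Cond {R : Type*} [CommRing R] (S : Subring R) (J : Ideal R) (e : R) : Prop :=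
  ∃ x y : R, x ∈ J ∧ y ∈ J ∧ e * x = x ∧ e * y = y ∧
    (∀ s ∈ S, y ≠ s * x) ∧ (∀ s ∈ S, x ≠ s * y)

lemma exists_top_aux {α : Type*} (r : α → α → Prop)
    (htrans : ∀ a b c, r a b → r b c → r a c)
    (s : Finset α) (hs : s.Nonempty) :
    (∀ a ∈ s, ∀ b ∈ s, r a b ∨ r b a) → ∃ m ∈ s, ∀ a ∈ s, r a m := by
  induction hs using Finset.Nonempty.cons_induction with
  | singleton a =>
    intro htot
    refine ⟨a, by simp, ?_⟩
    intro b hb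
    rw [Finset.mem_singleton] at hb
    subst hb
    rcases htot b (by simp) b (by simp) with h | h <;> exact h
  | cons a s h hs ih =>
    intro htot
    obtain ⟨m, hm, hmax⟩ := ih (fun x hx y hy =>
      htot x (Finset.mem_cons_of_mem hx) y (Finset.mem_cons_of_mem hy))
    rcases htot a (Finset.mem_cons_self a s) m (Finset.mem_cons_of_mem hm) with hh | hh
    · refine ⟨m, Finset.mem_cons_of_mem hm, ?_⟩
      intro b hb
      rcases Finset.mem_cons.mp hb with rfl | hb
      · exact hh
      · exact hmax b hb
    · refine ⟨a, Finset.mem_cons_self a s, ?_⟩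
      intro b hb
      rcases Finset.mem_cons.mp hb with rfl | hb
      · rcases htot b (Finset.mem_cons_self b s) b (Finset.mem_cons_self b s) with h' | h' <;> exact h'
      · exact htrans b m a (hmax b hb) hh

lemma single_mul_single {n : ℕ} (F : Fin n → Type*) [∀ i, Field (F i)] (i j : Fin n) :
    (Pi.single i (1 : F i)) * (Pi.single j 1) = if i = j then Pi.single i 1 else 0 := by
  split_ifs with h
  · subst h
    funext k
    by_cases hk : k = i
    · subst hk; simp
    · simp [Pi.single_eq_of_ne hk]
  · funext k
    by_cases hk : k = i
    · subst hk; simp [Pi.single_eq_of_ne h]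
    · simp [Pi.single_eq_of_ne hk]

/-- `J` is a finite union of proper `R`-subideals iff `Λ₂ ≠ ∅`; moreover, if
`Λ₂ = ∅` then `J` is a cyclic `R`-module. -/
theorem stmt_12 {R : Type*} [CommRing R] [Finite R] (p : ℕ) (hp : p.Prime) [CharP R p]
    (hJ2 : ∀ x ∈ Ideal.jacobson (⊥ : Ideal R), ∀ y ∈ Ideal.jacobson (⊥ : Ideal R), x * y = 0)
    (S : Subring R)
    (hdisj : ∀ x ∈ S, x ∈ Ideal.jacobson (⊥ : Ideal R) → x = 0)
    (hsum : ∀ r : R, ∃ s ∈ S, r - s ∈ Ideal.jacobson (⊥ : Ideal R))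
    (n : ℕ) (F : Fin n → Type*) [∀ i, Field (F i)] [∀ i, Fintype (F i)]
    (iso : S ≃+* ∀ i, F i) (e : Fin n → R)
    (he : ∀ i, e i = (iso.symm (Pi.single i 1) : R)) :
    ((∃ C : Finset (Ideal R), IsSubidealCover (Ideal.jacobson (⊥ : Ideal R)) C) ↔
        ∃ i, Lam2Cond S (Ideal.jacobson (⊥ : Ideal R)) (e i)) ∧
      ((¬ ∃ i, Lam2Cond S (Ideal.jacobson (⊥ : Ideal R)) (e i)) →
        ∃ x ∈ Ideal.jacobson (⊥ : Ideal R),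
          ∀ y ∈ Ideal.jacobson (⊥ : Ideal R), ∃ r : R, y = r * x) := by
  classical
  set J := Ideal.jacobson (⊥ : Ideal R) with hJdef
  -- basic facts about the idempotents
  have he_mem : ∀ i, e i ∈ S := by
    intro i; rw [he i]; exact SetLike.coe_mem _
  have hmul : ∀ i j, e i * e j = if i = j then e i else 0 := by
    intro i j
    rw [he i, he j, ← Subring.coe_mul, ← map_mul, single_mul_single]
    split_ifs with h
    · rfl
    · simp
  have hidem : ∀ i, e i * e i = e i := by intro i; simpa using hmul i i
  have horth : ∀ i j, i ≠ j → e i * e j = 0 := by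
    intro i j hij; simpa [hij] using hmul i j
  have hsum_e : (∑ i, e i) = 1 := by
    have h1 : (∑ i, iso.symm (Pi.single i 1)) = (1 : S) := by
      rw [← map_sum]
      have : (∑ i, Pi.single i (1 : F i)) = (1 : ∀ i, F i) := by
        simpa using Finset.univ_sum_single (1 : ∀ i, F i)
      rw [this, map_one]
    calc (∑ i, e i) = ∑ i, ((iso.symm (Pi.single i 1) : S) : R) := by
          exact Finset.sum_congr rfl fun i _ => he i
      _ = (((∑ i, iso.symm (Pi.single i 1)) : S) : R) := by push_cast; ring
      _ = 1 := by rw [h1, OneMemClass.coe_one]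
  -- Part C : no Lam2Cond implies J cyclic
  have hcyc : (¬ ∃ i, Lam2Cond S J (e i)) →
      ∃ x ∈ J, ∀ y ∈ J, ∃ r : R, y = r * x := by
    intro hno
    have hcomp : ∀ i, ∀ x y : R, x ∈ J → y ∈ J → e i * x = x → e i * y = y →
        (∃ s ∈ S, x = s * y) ∨ (∃ s ∈ S, y = s * x) := by
      intro i x y hx hy hex hey
      by_contra hc
      push_neg at hc
      exact hno ⟨i, x, y, hx, hy, hex, hey,
        fun s hs => hc.2 s hs, fun s hs => hc.1 s hs⟩
    -- for each i pick a generator of e i J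
    have hex : ∀ i : Fin n, ∃ v, (v ∈ J ∧ e i * v = v) ∧
        ∀ a, a ∈ J → e i * a = a → ∃ s ∈ S, a = s * v := by
      intro i
      have hfin : {x : R | x ∈ J ∧ e i * x = x}.Finite := Set.toFinite _
      set T : Finset R := hfin.toFinset with hT
      have h0T : (0 : R) ∈ T := by
        rw [hT, Set.Finite.mem_toFinset]; exact ⟨J.zero_mem, by ring⟩
      have htot : ∀ a ∈ T, ∀ b ∈ T, (∃ s ∈ S, a = s * b) ∨ (∃ s ∈ S, b = s * a) := by
        intro a ha b hb
        rw [hT, Set.Finite.mem_toFinset] at ha hb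
        exact hcomp i a b ha.1 hb.1 ha.2 hb.2
      obtain ⟨m, hm, hmax⟩ := exists_top_aux (fun a b => ∃ s ∈ S, a = s * b)
        (by rintro a b c ⟨s, hs, rfl⟩ ⟨t, ht, rfl⟩
            exact ⟨s * t, mul_mem hs ht, by ring⟩) T ⟨0, h0T⟩ htot
      rw [hT, Set.Finite.mem_toFinset] at hm
      refine ⟨m, hm, ?_⟩
      intro a haJ hae
      exact hmax a (by rw [hT, Set.Finite.mem_toFinset]; exact ⟨haJ, hae⟩)
    choose v hv hvmax using hex
    refine ⟨∑ i, v i, Ideal.sum_mem _ (fun i _ => (hv i).1), ?_⟩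
    intro y hy
    have key : ∀ i, ∃ s ∈ S, e i * y = s * v i := by
      intro i
      exact hvmax i (e i * y) (J.mul_mem_left _ hy)
        (by rw [← mul_assoc, hidem i])
    choose s hsS hsy using key
    have hev : ∀ i, e i * (∑ j, v j) = v i := by
      intro i
      rw [Finset.mul_sum]
      rw [Finset.sum_eq_single i]
      · exact (hv i).2
      · intro j _ hj
        rw [← (hv j).2, ← mul_assoc, horth i j (Ne.symm hj), zero_mul]
      · intro h; exact absurd (Finset.mem_univ i) h
    refine ⟨∑ i, s i * e i, ?_⟩
    calc y = 1 * y := (one_mul y).symm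
      _ = (∑ i, e i) * y := by rw [hsum_e]
      _ = ∑ i, e i * y := Finset.sum_mul _ _ _
      _ = ∑ i, s i * (e i * (∑ j, v j)) := by
          refine Finset.sum_congr rfl fun i _ => ?_
          rw [hsy i, hev i]
      _ = ∑ i, (s i * e i) * (∑ j, v j) := by
          refine Finset.sum_congr rfl fun i _ => by ring
      _ = (∑ i, s i * e i) * (∑ j, v j) := (Finset.sum_mul _ _ _).symm
  -- Part B : Lam2Cond implies not cyclic
  have hB : (∃ i, Lam2Cond S J (e i)) →
      ¬ ∃ x ∈ J, ∀ y ∈ J, ∃ r : R, y = r * x := by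
    rintro ⟨i, x, y, hxJ, hyJ, hex, hey, h1, h2⟩ ⟨z, hzJ, hgen⟩
    obtain ⟨r, hr⟩ := hgen x hxJ
    obtain ⟨r', hr'⟩ := hgen y hyJ
    obtain ⟨a, haS, haJ⟩ := hsum r
    obtain ⟨b, hbS, hbJ⟩ := hsum r'
    have hx' : x = (e i * a) * z := by
      have h0 : (r - a) * z = 0 := hJ2 _ haJ _ hzJ
      have : r * z = a * z := by linear_combination h0
      rw [← hex, hr, this]; ring
    have hy' : y = (e i * b) * z := by
      have h0 : (r' - b) * z = 0 := hJ2 _ hbJ _ hzJ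
      have : r' * z = b * z := by linear_combination h0
      rw [← hey, hr', this]; ring
    -- work in S
    set A : S := ⟨a, haS⟩
    set α : F i := iso A i with hα
    have hTiso : iso (⟨e i, he_mem i⟩ * A) = Pi.single i α := by
      rw [map_mul]
      have h1' : iso ⟨e i, he_mem i⟩ = Pi.single i 1 := by
        have : (⟨e i, he_mem i⟩ : S) = iso.symm (Pi.single i 1) := by
          ext; exact he i
        rw [this, RingEquiv.apply_symm_apply]
      rw [h1']
      funext k
      by_cases hk : k = i
      · subst hk; simp [hα]
      · simp [Pi.single_eq_of_ne hk]
    by_cases hα0 : α = 0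
    · -- then x = 0, contradiction with h2 at s = 0
      have hT0 : (⟨e i, he_mem i⟩ * A : S) = 0 := by
        apply iso.injective
        rw [hTiso, hα0, map_zero]
        funext k
        by_cases hk : k = i
        · subst hk; simp
        · simp [Pi.single_eq_of_ne hk]
      have hx0 : x = 0 := by
        have : e i * a = 0 := by
          have := congrArg (Subtype.val) hT0
          simpa using this
        rw [hx', this, zero_mul]
      exact h2 0 S.zero_mem (by rw [hx0, zero_mul])
    · -- α ≠ 0 : invert it
      set U : S := iso.symm (Pi.single i α⁻¹) with hU
      have hUT : (U * (⟨e i, he_mem i⟩ * A) : S) = ⟨e i, he_mem i⟩ := by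
        apply iso.injective
        rw [map_mul, hTiso, hU, RingEquiv.apply_symm_apply]
        have h1' : iso ⟨e i, he_mem i⟩ = Pi.single i 1 := by
          have : (⟨e i, he_mem i⟩ : S) = iso.symm (Pi.single i 1) := by
            ext; exact he i
          rw [this, RingEquiv.apply_symm_apply]
        rw [h1']
        funext k
        by_cases hk : k = i
        · subst hk; simp [inv_mul_cancel₀ hα0]
        · simp [Pi.single_eq_of_ne hk]
      have hUTR : (U : R) * (e i * a) = e i := by
        have := congrArg (Subtype.val) hUT
        simpa using this
      have : y = ((e i * b) * (U : R)) * x := by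
        calc y = (e i * b) * z := hy'
          _ = (e i * (e i * b)) * z := by rw [← mul_assoc, hidem i]
          _ = ((e i * b) * ((U : R) * (e i * a))) * z := by rw [hUTR]; ring
          _ = ((e i * b) * (U : R)) * ((e i * a) * z) := by ring
          _ = ((e i * b) * (U : R)) * x := by rw [← hx']
      exact h1 _ (mul_mem (mul_mem (he_mem i) hbS) (SetLike.coe_mem U)) this
  -- Lemma A : cover exists iff not cyclic
  have : Finite (Ideal R) :=
    Finite.of_injective (fun I : Ideal R => (I : Set R)) SetLike.coe_injective
  have hA : (∃ C : Finset (Ideal R), IsSubidealCover J C) ↔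
      ¬ ∃ x ∈ J, ∀ y ∈ J, ∃ r : R, y = r * x := by
    constructor
    · rintro ⟨C, hC1, hC2⟩ ⟨x, hxJ, hgen⟩
      obtain ⟨I, hIC, hxI⟩ := hC2 x hxJ
      obtain ⟨hIJ, hIne⟩ := hC1 I hIC
      apply hIne
      refine le_antisymm hIJ ?_
      intro w hw
      obtain ⟨r, rfl⟩ := hgen w hw
      exact I.mul_mem_left r hxI
    · intro hnc
      have hfin : {I : Ideal R | I ≤ J ∧ I ≠ J}.Finite := Set.toFinite _
      refine ⟨hfin.toFinset, ?_, ?_⟩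
      · intro I hI
        rw [Set.Finite.mem_toFinset] at hI
        exact hI
      · intro z hz
        refine ⟨Ideal.span {z}, ?_, Ideal.subset_span rfl⟩
        rw [Set.Finite.mem_toFinset]
        constructor
        · rw [Ideal.span_le, Set.singleton_subset_iff]; exact hz
        · intro hEq
          apply hnc
          refine ⟨z, hz, ?_⟩
          intro w hw
          have : w ∈ Ideal.span ({z} : Set R) := hEq ▸ hw
          obtain ⟨c, hc⟩ := Ideal.mem_span_singleton'.mp this
          exact ⟨c, hc.symm⟩
    
  refine ⟨?_, hcyc⟩
  constructor
  · intro hcov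
    by_contra hno
    exact (hA.mp hcov) (hcyc hno)
  · intro hlam
    exact hA.mpr (hB hlam)
end

section
/- Let R be a finite commutative ring of characteristic p with Jacobson radical J, J² = {0}, and with the notation S = F₁ ⊕ ⋯ ⊕ F_n, Λ₂ = {i : dim_{F_i} e_iJ ≥ 2} nonempty. Then the minimal number of proper R-subideals of J whose union is J equals min_{i ∈ Λ₂} |F_i| + 1. -/
/-!
Since `J² = 0`, `R` acts on `J` through `R/J ≅ S ≅ ∏ Fᵢ`, so `J = ⊕ eᵢJ` and each `eᵢJ` is an
`Fᵢ`-vector space whose subspaces are exactly the ideals of `R` inside it. If proper subideals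
`I ∈ C` cover `J`, then for some `i` those `I` not containing `eᵢJ` cover `eᵢJ`: otherwise choose in
each `eᵢJ` a vector avoiding them, and project their sum, which lies in some `I`. A vector space over
`Fᵢ` covered by proper subspaces has dimension at least `2` and needs more than `|Fᵢ|` of them.
Conversely, if `dim eᵢJ ≥ 2`, the `|Fᵢ| + 1` lines of `Fᵢ²`, pulled back along a surjection
`eᵢJ → Fᵢ²` and then along `J → eᵢJ, z ↦ eᵢz`, cover `J` by `|Fᵢ| + 1` proper subideals.
-/

theorem Module.two_le_rank_iff_exists_ne_smul {K V : Type*} [Field K] [AddCommGroup V]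
    [Module K V] : 2 ≤ Module.rank K V ↔ ∃ x y : V, (∀ a : K, y ≠ a • x) ∧ ∀ a : K, x ≠ a • y := by
  rw [← Nat.cast_ofNat, Module.le_rank_iff]
  constructor
  · rintro ⟨v, hv⟩
    obtain ⟨hv1, hv0⟩ := linearIndependent_fin2.1 hv
    refine ⟨v 1, v 0, fun a h => hv0 a h.symm, fun a h => ?_⟩
    have ha : a ≠ 0 := by rintro rfl; exact hv1 (by simpa using h)
    exact hv0 a⁻¹ (by rw [h, smul_smul, inv_mul_cancel₀ ha, one_smul])
  · rintro ⟨x, y, hyx, hxy⟩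
    refine ⟨![y, x], linearIndependent_fin2.2 ⟨?_, fun a h => hyx a h.symm⟩⟩
    simpa using hxy 0

namespace Submodule

section Semiring

variable {R M M' : Type*} [Semiring R] [AddCommMonoid M] [Module R M] [AddCommMonoid M']
  [Module R M']

def IsProperCover (C : Finset (Submodule R M)) : Prop :=
  (∀ W ∈ C, W ≠ ⊤) ∧ ∀ v, ∃ W ∈ C, v ∈ W

theorem IsProperCover.image_comap [DecidableEq (Submodule R M)] {C : Finset (Submodule R M')}
    (hC : IsProperCover C) {f : M →ₗ[R] M'} (hf : Function.Surjective f) :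
    IsProperCover (C.image (comap f)) := by
  refine ⟨?_, fun v => ?_⟩
  · simp only [Finset.mem_image, forall_exists_index, and_imp, forall_apply_eq_imp_iff₂]
    intro W hW htop
    exact hC.1 W hW (comap_injective_of_surjective hf (by rw [htop, comap_top]))
  · obtain ⟨W, hW, hv⟩ := hC.2 (f v)
    exact ⟨W.comap f, Finset.mem_image_of_mem _ hW, hv⟩

end Semiring

section Field

variable {K V : Type*} [Field K] [AddCommGroup V] [Module K V]

/- After discarding redundant members, some `W₁ ∈ C` contains a vector `x` lying in no other
member; for `y ∉ W₁` the `|K|` vectors `y + a • x` then lie in distinct members other than `W₁`. -/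
theorem IsProperCover.card_lt [Fintype K] {C : Finset (Submodule K V)} (hC : IsProperCover C) :
    Fintype.card K < C.card := by
  classical
  induction C using Finset.strongInduction with
  | H C ih =>
  by_cases hred : ∃ W ∈ C, IsProperCover (C.erase W)
  · obtain ⟨W, hW, hcov⟩ := hred
    exact (ih _ (Finset.erase_ssubset hW) hcov).trans (Finset.card_erase_lt_of_mem hW)
  obtain ⟨W₁, hW₁, -⟩ := hC.2 0
  obtain ⟨x, hxW₁, hx⟩ : ∃ x ∈ W₁, ∀ W ∈ C.erase W₁, x ∉ W := by
    have hnot : ¬ ∀ v, ∃ W ∈ C.erase W₁, v ∈ W := fun h =>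
      hred ⟨W₁, hW₁, fun W hW => hC.1 W (Finset.mem_of_mem_erase hW), h⟩
    push Not at hnot
    obtain ⟨x, hx⟩ := hnot
    obtain ⟨W, hW, hxW⟩ := hC.2 x
    obtain rfl : W = W₁ := by_contra fun h => hx W (Finset.mem_erase.2 ⟨h, hW⟩) hxW
    exact ⟨x, hxW, hx⟩
  obtain ⟨y, hy⟩ : ∃ y, y ∉ W₁ := by
    by_contra! h
    exact hC.1 W₁ hW₁ (eq_top_iff.2 fun v _ => h v)
  choose f hfC hf using fun a : K => hC.2 (y + a • x)
  have hf_ne : ∀ a, f a ≠ W₁ := fun a h =>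
    hy ((W₁.add_mem_iff_left (W₁.smul_mem a hxW₁)).1 (h ▸ hf a))
  have hf_inj : Function.Injective f := by
    intro a b hab
    by_contra hne
    have hsub : (a - b) • x ∈ f a := by
      have := (f a).sub_mem (hf a) (hab ▸ hf b)
      rwa [add_sub_add_left_eq_sub, ← sub_smul] at this
    exact hx (f a) (Finset.mem_erase.2 ⟨hf_ne a, hfC a⟩)
      ((smul_mem_iff _ (sub_ne_zero.2 hne)).1 hsub)
  calc Fintype.card K = (Finset.univ : Finset K).card := Finset.card_univ.symm
    _ ≤ (C.erase W₁).card :=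
      Finset.card_le_card_of_injOn f (fun a _ => Finset.mem_erase.2 ⟨hf_ne a, hfC a⟩)
        hf_inj.injOn
    _ < C.card := Finset.card_erase_lt_of_mem hW₁

theorem IsProperCover.two_le_rank {C : Finset (Submodule K V)} (hC : IsProperCover C) :
    2 ≤ Module.rank K V := by
  obtain ⟨W₀, hW₀, -⟩ := hC.2 0
  obtain ⟨y, hy⟩ : ∃ y, y ∉ W₀ := by
    by_contra! h
    exact hC.1 W₀ hW₀ (eq_top_iff.2 fun v _ => h v)
  obtain ⟨W₁, hW₁, hyW₁⟩ := hC.2 y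
  obtain ⟨x, hx⟩ : ∃ x, x ∉ W₁ := by
    by_contra! h
    exact hC.1 W₁ hW₁ (eq_top_iff.2 fun v _ => h v)
  refine Module.two_le_rank_iff_exists_ne_smul.2
    ⟨x, y, fun a h => ?_, fun a h => hx (h ▸ W₁.smul_mem a hyW₁)⟩
  have ha : a ≠ 0 := by rintro rfl; exact hy (by simp [h])
  exact hx ((smul_mem_iff _ ha).1 (h ▸ hyW₁))

theorem exists_isProperCover_fin_two [Fintype K] :
    ∃ C : Finset (Submodule K (Fin 2 → K)), IsProperCover C ∧ C.card = Fintype.card K + 1 := by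
  classical
  let line : K → Submodule K (Fin 2 → K) := fun a =>
    LinearMap.ker (LinearMap.proj 1 - a • LinearMap.proj 0)
  have mem_line : ∀ a v, v ∈ line a ↔ v 1 = a * v 0 := fun a v => by
    simp [line, sub_eq_zero]
  have hline_inj : Function.Injective line := fun a b hab => by
    simpa using (mem_line b ![1, a]).1 (hab ▸ (mem_line a ![1, a]).2 (by simp))
  refine ⟨insert (LinearMap.ker (LinearMap.proj 0)) (Finset.univ.image line), ⟨?_, fun v => ?_⟩, ?_⟩
  · simp only [Finset.mem_insert, Finset.mem_image, Finset.mem_univ, true_and]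
    rintro W (rfl | ⟨a, rfl⟩) htop
    · simpa using (htop ▸ mem_top : ![(1 : K), 0] ∈ LinearMap.ker (LinearMap.proj (R := K) 0))
    · simpa using (mem_line a ![0, 1]).1 (htop ▸ mem_top)
  · by_cases hv : v 0 = 0
    · exact ⟨_, Finset.mem_insert_self _ _, by simpa using hv⟩
    · refine ⟨line (v 1 / v 0),
        Finset.mem_insert_of_mem (Finset.mem_image_of_mem _ (Finset.mem_univ _)), ?_⟩
      rw [mem_line, div_mul_cancel₀ _ hv]
  · rw [Finset.card_insert_of_notMem, Finset.card_image_of_injective _ hline_inj, Finset.card_univ]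
    simp only [Finset.mem_image, Finset.mem_univ, true_and, not_exists]
    intro a ha
    simpa using (ha ▸ (mem_line a ![1, a]).2 (by simp) :
      ![1, a] ∈ LinearMap.ker (LinearMap.proj (R := K) 0))

theorem exists_isProperCover_of_two_le_rank [Fintype K] (h : 2 ≤ Module.rank K V) :
    ∃ C : Finset (Submodule K V), IsProperCover C ∧ C.card = Fintype.card K + 1 := by
  classical
  rw [← Nat.cast_ofNat, Module.le_rank_iff] at h
  obtain ⟨v, hv⟩ := h
  obtain ⟨g, hg⟩ := LinearMap.exists_leftInverse_of_injective (Finsupp.linearCombination K v)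
    (LinearMap.ker_eq_bot.2 hv)
  let π := (Finsupp.linearEquivFunOnFinite K K (Fin 2)).toLinearMap ∘ₗ g
  have hπ : Function.Surjective π :=
    (Finsupp.linearEquivFunOnFinite K K (Fin 2)).surjective.comp
      (Function.LeftInverse.surjective (LinearMap.congr_fun hg))
  obtain ⟨C, hC, hcard⟩ := exists_isProperCover_fin_two (K := K)
  exact ⟨C.image (comap π), hC.image_comap hπ,
    by rw [Finset.card_image_of_injective _ (comap_injective_of_surjective hπ), hcard]⟩

end Field

section Peirce

variable {A M : Type*} [CommSemiring A] [AddCommMonoid M] [Module A M]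

/-- For idempotent `e` this is `e • N`, the Peirce component of `N`. -/
def peirce (N : Submodule A M) (e : A) : Submodule A M where
  carrier := {m | m ∈ N ∧ e • m = m}
  add_mem' := fun ⟨hm, hem⟩ ⟨hn, hen⟩ => ⟨N.add_mem hm hn, by rw [smul_add, hem, hen]⟩
  zero_mem' := ⟨N.zero_mem, smul_zero e⟩
  smul_mem' := fun a _ ⟨hm, hem⟩ => ⟨N.smul_mem a hm, by rw [smul_comm, hem]⟩

theorem exists_peirce_cover {ι : Type*} [Fintype ι] {e : ι → A}
    (he : CompleteOrthogonalIdempotents e) {N : Submodule A M} {C : Finset (Submodule A M)}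
    (hC : ∀ I ∈ C, ¬ N ≤ I) (hcover : ∀ m ∈ N, ∃ I ∈ C, m ∈ I) :
    ∃ i, ∀ m ∈ N.peirce (e i), ∃ I ∈ C, ¬ N.peirce (e i) ≤ I ∧ m ∈ I := by
  classical
  by_contra! h
  choose m hm hmI using h
  obtain ⟨I, hI, hsumI⟩ := hcover (∑ i, m i) (sum_mem fun i _ => (hm i).1)
  obtain ⟨x, hxN, hxI⟩ := SetLike.not_le_iff_exists.1 (hC I hI)
  obtain ⟨i, hi⟩ : ∃ i, e i • x ∉ I := by
    by_contra! h
    apply hxI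
    rw [← one_smul A x, ← he.complete, Finset.sum_smul]
    exact sum_mem fun i _ => h i
  have hproj : e i • ∑ j, m j = m i := by
    rw [Finset.smul_sum, Finset.sum_eq_single i, (hm i).2]
    · intro j _ hji
      rw [← (hm j).2, smul_smul, he.ortho hji.symm, zero_smul]
    · simp
  refine hmI i I hI (fun hle => hi (hle ⟨N.smul_mem _ hxN, ?_⟩)) (hproj ▸ I.smul_mem _ hsumI)
  rw [smul_smul, (he.idem i).eq]

end Peirce

end Submodule

namespace Ideal

variable {R K : Type*} [CommRing R] [Field K]

/-- `eJ` for the idempotent `e = σ 1`; it is a `K`-vector space through `σ`. -/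
def component (J : Ideal R) (σ : K →ₙ+* R) : Ideal R :=
  J.peirce (σ 1)

variable {J : Ideal R} {σ : K →ₙ+* R}

theorem mem_component {z : R} : z ∈ J.component σ ↔ z ∈ J ∧ σ 1 * z = z :=
  Iff.rfl

theorem map_one_mul_mem_component {z : R} (hz : z ∈ J) : σ 1 * z ∈ J.component σ :=
  ⟨J.mul_mem_left _ hz, show σ 1 * (σ 1 * z) = σ 1 * z by rw [← mul_assoc, ← map_mul, one_mul]⟩

instance (J : Ideal R) (σ : K →ₙ+* R) : SMul K (J.component σ) where
  smul a v := ⟨σ a * v, (J.component σ).mul_mem_left _ v.2⟩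

@[simp]
theorem coe_component_smul (a : K) (v : J.component σ) :
    ((a • v : J.component σ) : R) = σ a * v :=
  rfl

instance (J : Ideal R) (σ : K →ₙ+* R) : Module K (J.component σ) where
  one_smul v := Subtype.ext v.2.2
  mul_smul a b v := Subtype.ext (by simp only [coe_component_smul, map_mul, mul_assoc])
  smul_zero a := Subtype.ext (mul_zero _)
  smul_add a v w := Subtype.ext (mul_add _ _ _)
  add_smul a b v := Subtype.ext (by simp only [coe_component_smul, map_add, add_mul]; rfl)
  zero_smul v := Subtype.ext (by simp only [coe_component_smul, map_zero, zero_mul]; rfl)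

def comapComponent (J : Ideal R) (σ : K →ₙ+* R) (I : Ideal R) :
    Submodule K (J.component σ) where
  carrier := {v | (v : R) ∈ I}
  add_mem' := I.add_mem
  zero_mem' := I.zero_mem
  smul_mem' a _ hv := I.mul_mem_left (σ a) hv

theorem exists_isProperCover_of_component_cover {C : Finset (Ideal R)}
    (hcover : ∀ v ∈ J.component σ, ∃ I ∈ C, ¬ J.component σ ≤ I ∧ v ∈ I) :
    ∃ D : Finset (Submodule K (J.component σ)), Submodule.IsProperCover D ∧ D.card ≤ C.card := by
  classical
  refine ⟨(C.filter (¬ J.component σ ≤ ·)).image (comapComponent J σ), ⟨?_, fun v => ?_⟩,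
    Finset.card_image_le.trans (Finset.card_filter_le _ _)⟩
  · simp only [Finset.mem_image, Finset.mem_filter, forall_exists_index, and_imp]
    rintro _ I - hI rfl htop
    exact hI fun v hv =>
      (htop ▸ Submodule.mem_top : (⟨v, hv⟩ : J.component σ) ∈ comapComponent J σ I)
  · obtain ⟨I, hI, hIle, hvI⟩ := hcover v v.2
    exact ⟨_, Finset.mem_image_of_mem _ (Finset.mem_filter.2 ⟨hI, hIle⟩), hvI⟩

/-- The preimage of `W` under `J → J.component σ, z ↦ σ 1 * z`; it is an ideal because `R` acts
on the component through `σ` (hypothesis `hσ`). -/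
def comapComponentProj (hσ : ∀ r : R, ∃ a : K, ∀ v ∈ J.component σ, r * v = σ a * v)
    (W : Submodule K (J.component σ)) : Ideal R where
  carrier := {z | z ∈ J ∧ σ 1 * z ∈ ((↑) '' (W : Set (J.component σ)))}
  add_mem' := by
    rintro z z' ⟨hz, w, hw, hwz⟩ ⟨hz', w', hw', hwz'⟩
    exact ⟨J.add_mem hz hz', w + w', W.add_mem hw hw', by simp [hwz, hwz', mul_add]⟩
  zero_mem' := ⟨J.zero_mem, 0, W.zero_mem, by simp⟩
  smul_mem' := by
    rintro r z ⟨hz, w, hw, hwz⟩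
    obtain ⟨a, ha⟩ := hσ r
    refine ⟨J.mul_mem_left r hz, a • w, W.smul_mem a hw, ?_⟩
    rw [coe_component_smul, ← ha _ w.2, hwz, smul_eq_mul, mul_left_comm]

theorem mem_comapComponentProj_iff
    (hσ : ∀ r : R, ∃ a : K, ∀ v ∈ J.component σ, r * v = σ a * v)
    {W : Submodule K (J.component σ)} (v : J.component σ) :
    (v : R) ∈ comapComponentProj hσ W ↔ v ∈ W := by
  have hv : σ 1 * v = v := v.2.2
  refine ⟨fun ⟨_, w, hw, hwv⟩ => ?_, fun h => ⟨v.2.1, v, h, hv.symm⟩⟩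
  rwa [← Subtype.ext (hwv.trans hv)]

theorem exists_subidealCover_of_isProperCover
    (hσ : ∀ r : R, ∃ a : K, ∀ v ∈ J.component σ, r * v = σ a * v)
    {C : Finset (Submodule K (J.component σ))} (hC : Submodule.IsProperCover C) :
    ∃ D : Finset (Ideal R), IsSubidealCover J D ∧ D.card = C.card := by
  classical
  have hinj : Function.Injective (comapComponentProj hσ) := fun W₁ W₂ h => by
    ext v
    rw [← mem_comapComponentProj_iff hσ, h, mem_comapComponentProj_iff]
  refine ⟨C.image (comapComponentProj hσ), ⟨?_, fun z hz => ?_⟩,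
    Finset.card_image_of_injective _ hinj⟩
  · simp only [Finset.mem_image, forall_exists_index, and_imp]
    rintro _ W hW rfl
    refine ⟨fun z hz => hz.1, fun hJ => ?_⟩
    obtain ⟨v, hv⟩ := SetLike.not_le_iff_exists.1 (mt top_le_iff.1 (hC.1 W hW))
    exact hv.2 ((mem_comapComponentProj_iff hσ v).1 (hJ.symm ▸ v.2.1))
  · obtain ⟨W, hW, hzW⟩ := hC.2 ⟨σ 1 * z, map_one_mul_mem_component hz⟩
    exact ⟨_, Finset.mem_image_of_mem _ hW, hz, _, hzW, rfl⟩

end Ideal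

def NonUnitalRingHom.single {ι : Type*} [DecidableEq ι] (F : ι → Type*)
    [∀ i, NonUnitalNonAssocSemiring (F i)] (i : ι) : F i →ₙ+* ∀ i, F i :=
  { MulHom.single i, AddMonoidHom.single F i with }

section Factors

variable {R : Type*} [CommRing R] {S : Subring R} {ι : Type*} [DecidableEq ι] {F : ι → Type*}
  [∀ i, Field (F i)]

/-- The inclusion `F i → ∏ F j ≅ S ⊆ R`; it sends `1` to the idempotent `e i`. -/
def factorHom (iso : S ≃+* ∀ i, F i) (i : ι) : F i →ₙ+* R :=
  (S.subtype.comp iso.symm.toRingHom).toNonUnitalRingHom.comp (NonUnitalRingHom.single F i)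

variable (iso : S ≃+* ∀ i, F i)

theorem factorHom_mem (i : ι) (a : F i) : factorHom iso i a ∈ S :=
  (iso.symm (Pi.single i a)).2

theorem completeOrthogonalIdempotents_factorHom_one [Fintype ι] :
    CompleteOrthogonalIdempotents fun i => factorHom iso i 1 :=
  (CompleteOrthogonalIdempotents.single F).map (S.subtype.comp iso.symm.toRingHom)

theorem mul_factorHom_one (s : S) (i : ι) :
    (s : R) * factorHom iso i 1 = factorHom iso i (iso s i) := by
  have : iso.symm (iso s * Pi.single i 1) = s * iso.symm (Pi.single i 1) := by
    rw [map_mul, iso.symm_apply_apply]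
  rw [← Pi.single_mul_right, mul_one] at this
  exact congrArg Subtype.val this.symm

theorem mul_eq_factorHom_mul {J : Ideal R} {i : ι} (s : S) {x : R}
    (hx : x ∈ J.component (factorHom iso i)) : (s : R) * x = factorHom iso i (iso s i) * x := by
  rw [← mul_factorHom_one, mul_assoc, (Ideal.mem_component.1 hx).2]

theorem exists_factorHom_mul_eq {J : Ideal R} (hJ2 : ∀ x ∈ J, ∀ y ∈ J, x * y = 0)
    (hsum : ∀ r : R, ∃ s ∈ S, r - s ∈ J) (i : ι) (r : R) :
    ∃ a, ∀ v ∈ J.component (factorHom iso i), r * v = factorHom iso i a * v := by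
  obtain ⟨s, hs, hrs⟩ := hsum r
  refine ⟨iso ⟨s, hs⟩ i, fun v hv => ?_⟩
  rw [← mul_eq_factorHom_mul iso ⟨s, hs⟩ hv]
  calc r * v = s * v + (r - s) * v := by ring
    _ = s * v := by rw [hJ2 _ hrs _ hv.1, add_zero]

theorem lam2Cond_factorHom_iff {J : Ideal R} (i : ι) :
    Lam2Cond S J (factorHom iso i 1) ↔ 2 ≤ Module.rank (F i) (J.component (factorHom iso i)) := by
  rw [Module.two_le_rank_iff_exists_ne_smul]
  constructor
  · rintro ⟨x, y, hx, hy, hex, hey, hyx, hxy⟩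
    exact ⟨⟨x, hx, hex⟩, ⟨y, hy, hey⟩,
      fun a h => hyx _ (factorHom_mem iso i a) (congrArg Subtype.val h),
      fun a h => hxy _ (factorHom_mem iso i a) (congrArg Subtype.val h)⟩
  · rintro ⟨x, y, hyx, hxy⟩
    refine ⟨x, y, x.2.1, y.2.1, x.2.2, y.2.2, fun s hs h => hyx (iso ⟨s, hs⟩ i) (Subtype.ext ?_),
      fun s hs h => hxy (iso ⟨s, hs⟩ i) (Subtype.ext ?_)⟩
    · rw [Ideal.coe_component_smul, ← mul_eq_factorHom_mul iso ⟨s, hs⟩ x.2]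
      exact h
    · rw [Ideal.coe_component_smul, ← mul_eq_factorHom_mul iso ⟨s, hs⟩ y.2]
      exact h

end Factors

theorem stmt_13_general {R : Type*} [CommRing R]
    (hJ2 : ∀ x ∈ Ideal.jacobson (⊥ : Ideal R), ∀ y ∈ Ideal.jacobson (⊥ : Ideal R), x * y = 0)
    (S : Subring R)
    (hsum : ∀ r : R, ∃ s ∈ S, r - s ∈ Ideal.jacobson (⊥ : Ideal R))
    (n : ℕ) (F : Fin n → Type*) [∀ i, Field (F i)] [∀ i, Fintype (F i)]
    (iso : S ≃+* ∀ i, F i) (e : Fin n → R)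
    (he : ∀ i, e i = (iso.symm (Pi.single i 1) : R))
    (hLam2 : ∃ i, Lam2Cond S (Ideal.jacobson (⊥ : Ideal R)) (e i)) :
    IsLeast {k : ℕ | ∃ C : Finset (Ideal R),
        IsSubidealCover (Ideal.jacobson (⊥ : Ideal R)) C ∧ C.card = k}
      (sInf {c : ℕ | ∃ i, Lam2Cond S (Ideal.jacobson (⊥ : Ideal R)) (e i) ∧
        c = Fintype.card (F i)} + 1) := by
  set J := Ideal.jacobson (⊥ : Ideal R)
  obtain rfl : e = fun i => factorHom iso i 1 := funext he
  set Λ : Set ℕ := {c | ∃ i, Lam2Cond S J (factorHom iso i 1) ∧ c = Fintype.card (F i)}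
  refine ⟨?_, ?_⟩
  · obtain ⟨i₀, hi₀⟩ := hLam2
    obtain ⟨i, hi, hq⟩ : sInf Λ ∈ Λ := Nat.sInf_mem ⟨_, i₀, hi₀, rfl⟩
    obtain ⟨C, hC, hCcard⟩ :=
      Submodule.exists_isProperCover_of_two_le_rank ((lam2Cond_factorHom_iff iso i).1 hi)
    obtain ⟨D, hD, hDcard⟩ :=
      Ideal.exists_subidealCover_of_isProperCover (exists_factorHom_mul_eq iso hJ2 hsum i) hC
    exact ⟨D, hD, by rw [hDcard, hCcard, hq]⟩
  · rintro k ⟨C, ⟨hCJ, hcover⟩, rfl⟩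
    obtain ⟨i, hi⟩ := Submodule.exists_peirce_cover
      (completeOrthogonalIdempotents_factorHom_one iso)
      (fun I hI hJI => (hCJ I hI).2 (le_antisymm (hCJ I hI).1 hJI)) hcover
    obtain ⟨D, hD, hDcard⟩ := Ideal.exists_isProperCover_of_component_cover hi
    have hiΛ : Fintype.card (F i) ∈ Λ :=
      ⟨i, (lam2Cond_factorHom_iff iso i).2 hD.two_le_rank, rfl⟩
    exact (Nat.sInf_le hiΛ).trans_lt (hD.card_lt.trans_le hDcard)

/-- If `Λ₂ ≠ ∅`, then the minimal number of proper `R`-subideals of `J` covering `J`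
is `min_{i ∈ Λ₂} |F i| + 1`. -/
theorem stmt_13 {R : Type*} [CommRing R] [Finite R] (p : ℕ) (hp : p.Prime) [CharP R p]
    (hJ2 : ∀ x ∈ Ideal.jacobson (⊥ : Ideal R), ∀ y ∈ Ideal.jacobson (⊥ : Ideal R), x * y = 0)
    (S : Subring R)
    (hdisj : ∀ x ∈ S, x ∈ Ideal.jacobson (⊥ : Ideal R) → x = 0)
    (hsum : ∀ r : R, ∃ s ∈ S, r - s ∈ Ideal.jacobson (⊥ : Ideal R))
    (n : ℕ) (F : Fin n → Type*) [∀ i, Field (F i)] [∀ i, Fintype (F i)]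
    (iso : S ≃+* ∀ i, F i) (e : Fin n → R)
    (he : ∀ i, e i = (iso.symm (Pi.single i 1) : R))
    (hLam2 : ∃ i, Lam2Cond S (Ideal.jacobson (⊥ : Ideal R)) (e i)) :
    IsLeast {k : ℕ | ∃ C : Finset (Ideal R),
        IsSubidealCover (Ideal.jacobson (⊥ : Ideal R)) C ∧ C.card = k}
      (sInf {c : ℕ | ∃ i, Lam2Cond S (Ideal.jacobson (⊥ : Ideal R)) (e i) ∧
        c = Fintype.card (F i)} + 1) :=
  stmt_13_general hJ2 S hsum n F iso e he hLam2
end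

section
/- Let R be a finite commutative ring of characteristic p with Jacobson radical J, J² = {0}, and R = S ⊕ J with S semisimple. If J cannot be written as a union of finitely many proper ideals of R contained in J (i.e., J = Rx for some x ∈ J), and R is coverable, then σ(R) = σ(R/J). -/
section Aux
variable {R : Type*} [CommRing R]

lemma mem_jac_of_pow_eq_zero (x : R) (n : ℕ) (h : x ^ n = 0) :
    x ∈ Ideal.jacobson (⊥ : Ideal R) := by
  rw [Ideal.jacobson, Submodule.mem_sInf]
  rintro M ⟨-, hM⟩
  exact hM.isPrime.mem_of_pow_mem n (h ▸ M.zero_mem)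

lemma npow_mem_nus (T : NonUnitalSubring R) {a : R} (ha : a ∈ T) :
    ∀ n : ℕ, a ^ (n + 1) ∈ T := by
  intro n
  induction n with
  | zero => simpa using ha
  | succ k ih => rw [pow_succ]; exact mul_mem ih ha

/-- The ideal `T ∩ J` for a subring `T` with `T + J = R`. -/
def badIdeal (hJ2 : ∀ x ∈ Ideal.jacobson (⊥ : Ideal R), ∀ y ∈ Ideal.jacobson (⊥ : Ideal R), x * y = 0)
    (T : NonUnitalSubring R)
    (hT : ∀ y : R, ∃ t ∈ T, y - t ∈ Ideal.jacobson (⊥ : Ideal R)) : Ideal R where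
  carrier := {x | x ∈ T ∧ x ∈ Ideal.jacobson (⊥ : Ideal R)}
  add_mem' ha hb := ⟨add_mem ha.1 hb.1, add_mem ha.2 hb.2⟩
  zero_mem' := ⟨zero_mem T, zero_mem _⟩
  smul_mem' := by
    intro c x hx
    obtain ⟨t, htT, htJ⟩ := hT c
    have key : c • x = t * x + (c - t) * x := by simp [smul_eq_mul]; ring
    have hz : (c - t) * x = 0 := hJ2 _ htJ _ hx.2
    constructor
    · rw [key, hz, add_zero]; exact mul_mem htT hx.1
    · show c • x ∈ Ideal.jacobson (⊥ : Ideal R)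
      exact Ideal.mul_mem_left _ c hx.2

lemma mem_badIdeal (hJ2 : ∀ x ∈ Ideal.jacobson (⊥ : Ideal R), ∀ y ∈ Ideal.jacobson (⊥ : Ideal R), x * y = 0)
    (T : NonUnitalSubring R) (hT) (x : R) :
    x ∈ badIdeal hJ2 T hT ↔ x ∈ T ∧ x ∈ Ideal.jacobson (⊥ : Ideal R) := Iff.rfl

/-- Key lemma: a subring `T` with `T + J = R` contains `S`. -/
lemma S_le_bad [Finite R] (p : ℕ) (hp : p.Prime) [CharP R p]
    (hJ2 : ∀ x ∈ Ideal.jacobson (⊥ : Ideal R), ∀ y ∈ Ideal.jacobson (⊥ : Ideal R), x * y = 0)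
    (S : Subring R)
    (hdisj : ∀ x ∈ S, x ∈ Ideal.jacobson (⊥ : Ideal R) → x = 0)
    (T : NonUnitalSubring R)
    (hT : ∀ y : R, ∃ t ∈ T, y - t ∈ Ideal.jacobson (⊥ : Ideal R)) :
    ∀ s ∈ S, s ∈ T := by
  haveI := Fact.mk hp
  have hinj : Function.Injective (fun v : S => v ^ p) := by
    intro v w h
    simp only at h
    have h1 : (v - w) ^ p = 0 := by rw [sub_pow_char, h, sub_self]
    have h2 : ((v : R) - (w : R)) ^ p = 0 := by
      have := congrArg (Subring.subtype S) h1
      push_cast at this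
      simpa using this
    have h3 : (v : R) - (w : R) ∈ Ideal.jacobson (⊥ : Ideal R) :=
      mem_jac_of_pow_eq_zero _ p h2
    have h4 : (v : R) - (w : R) = 0 := hdisj _ (sub_mem v.2 w.2) h3
    have : (v : R) = w := sub_eq_zero.mp h4
    exact Subtype.ext this
  have hsurj : Function.Surjective (fun v : S => v ^ p) :=
    Finite.injective_iff_surjective.mp hinj
  intro s hs
  obtain ⟨v, hv⟩ := hsurj ⟨s, hs⟩
  have hvp : (v : R) ^ p = s := by
    have := congrArg (Subring.subtype S) hv
    push_cast at this
    simpa using this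
  obtain ⟨t, htT, htJ⟩ := hT (v : R)
  have hjJ : t - (v : R) ∈ Ideal.jacobson (⊥ : Ideal R) := by
    have := neg_mem htJ
    simpa using this
  have hjp : (t - (v : R)) ^ p = 0 := by
    obtain ⟨k, hk⟩ : ∃ k, p = k + 2 := ⟨p - 2, by have := hp.two_le; omega⟩
    rw [hk, pow_add, pow_two, hJ2 _ hjJ _ hjJ, mul_zero]
  have htp : t ^ p = s := by
    have : t = (v : R) + (t - (v : R)) := by ring
    rw [this, add_pow_char _ _ p, hvp, hjp, add_zero]
  have : t ^ p ∈ T := by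
    obtain ⟨k, hk⟩ : ∃ k, p = k + 1 := ⟨p - 1, by have := hp.two_le; omega⟩
    rw [hk]; exact npow_mem_nus T htT k
  rwa [htp] at this

end Aux

/-- If `J` is not coverable by proper subideals and `R` is coverable, then
`σ(R) = σ(R/J)`. -/
theorem stmt_14 {R : Type*} [CommRing R] [Finite R] (p : ℕ) (hp : p.Prime) [CharP R p]
    (hJ2 : ∀ x ∈ Ideal.jacobson (⊥ : Ideal R), ∀ y ∈ Ideal.jacobson (⊥ : Ideal R), x * y = 0)
    (S : Subring R) [IsSemisimpleRing S]
    (hdisj : ∀ x ∈ S, x ∈ Ideal.jacobson (⊥ : Ideal R) → x = 0)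
    (hsum : ∀ r : R, ∃ s ∈ S, r - s ∈ Ideal.jacobson (⊥ : Ideal R))
    (hJ : ¬ ∃ C : Finset (Ideal R), IsSubidealCover (Ideal.jacobson (⊥ : Ideal R)) C)
    (hcov : ∃ C : Finset (NonUnitalSubring R), IsSubringCover C) :
    ringSigma R = ringSigma (R ⧸ Ideal.jacobson (⊥ : Ideal R)) := by
  classical
  haveI := Fact.mk hp
  set J := Ideal.jacobson (⊥ : Ideal R) with hJdef
  let π : R →+* R ⧸ J := Ideal.Quotient.mk J
  have hπs : Function.Surjective π := Ideal.Quotient.mk_surjective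
  apply le_antisymm
  · -- σ(R) ≤ σ(R/J)
    apply le_sInf
    rintro n ⟨D, ⟨hDprop, hDcov⟩, rfl⟩
    set C : Finset (NonUnitalSubring R) := D.image (fun U => NonUnitalSubring.comap π U) with hC
    have hcover : IsSubringCover C := by
      constructor
      · intro T hT
        rw [hC, Finset.mem_image] at hT
        obtain ⟨U, hU, rfl⟩ := hT
        intro htop
        apply hDprop U hU
        ext y
        simp only [NonUnitalSubring.mem_top, iff_true]
        obtain ⟨x, rfl⟩ := hπs y
        have : x ∈ NonUnitalSubring.comap π U := htop ▸ NonUnitalSubring.mem_top x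
        exact NonUnitalSubring.mem_comap.mp this
      · intro r
        obtain ⟨U, hU, hrU⟩ := hDcov (π r)
        exact ⟨NonUnitalSubring.comap π U, Finset.mem_image_of_mem _ hU,
          NonUnitalSubring.mem_comap.mpr hrU⟩
    calc ringSigma R ≤ (C.card : ℕ∞) := sInf_le ⟨C, hcover, rfl⟩
      _ ≤ (D.card : ℕ∞) := by exact_mod_cast Finset.card_image_le
  · -- σ(R/J) ≤ σ(R)
    apply le_sInf
    rintro n ⟨C, ⟨hCprop, hCcov⟩, rfl⟩
    set P : NonUnitalSubring R → Prop := fun T => ∀ y : R, ∃ t ∈ T, y - t ∈ J with hP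
    set D : Finset (NonUnitalSubring (R ⧸ J)) :=
      (C.filter (fun T => ¬ P T)).image (fun T => NonUnitalSubring.map π T) with hD
    have hDcover : IsSubringCover D := by
      constructor
      · intro U hU
        rw [hD, Finset.mem_image] at hU
        obtain ⟨T, hT, rfl⟩ := hU
        rw [Finset.mem_filter] at hT
        intro htop
        apply hT.2
        intro y
        have : π y ∈ NonUnitalSubring.map π T := htop ▸ NonUnitalSubring.mem_top _
        obtain ⟨t, htT, hty⟩ := NonUnitalSubring.mem_map.mp this
        refine ⟨t, htT, ?_⟩
        have := Ideal.Quotient.eq.mp hty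
        simpa using (neg_mem this)
      · intro ρ
        obtain ⟨r, rfl⟩ := hπs ρ
        by_contra hcon
        push_neg at hcon
        apply hJ
        obtain ⟨s, hsS, hsJ⟩ := hsum r
        refine ⟨(C.filter (fun T => P T)).attach.image
          (fun T => badIdeal hJ2 T.1 ((Finset.mem_filter.mp T.2).2)), ?_, ?_⟩
        · rintro I hI
          rw [Finset.mem_image] at hI
          obtain ⟨⟨T, hTf⟩, -, rfl⟩ := hI
          obtain ⟨hTC, hTP⟩ := Finset.mem_filter.mp hTf
          constructor
          · intro x hx
            exact ((mem_badIdeal hJ2 T _ x).mp hx).2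
          · intro heq
            apply hCprop T hTC
            ext y
            simp only [NonUnitalSubring.mem_top, iff_true]
            obtain ⟨t, htT, htJ⟩ := hTP y
            have : y - t ∈ badIdeal hJ2 T ((Finset.mem_filter.mp hTf).2) := heq ▸ htJ
            have h2 : y - t ∈ T := ((mem_badIdeal hJ2 T _ _).mp this).1
            have : y = t + (y - t) := by ring
            rw [this]; exact add_mem htT h2
        · intro x hx
          obtain ⟨T, hTC, hzT⟩ := hCcov (s + x)
          have hTP : P T := by
            by_contra hTP
            apply hcon (NonUnitalSubring.map π T)
            · rw [hD, Finset.mem_image]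
              exact ⟨T, Finset.mem_filter.mpr ⟨hTC, hTP⟩, rfl⟩
            · have heq : π r = π (s + x) := by
                rw [Ideal.Quotient.eq]
                have : r - (s + x) = (r - s) + (-x) := by ring
                rw [this]
                exact add_mem hsJ (neg_mem hx)
              rw [heq]
              exact NonUnitalSubring.mem_map.mpr ⟨s + x, hzT, rfl⟩
          have hsT : s ∈ T := S_le_bad p hp hJ2 S hdisj T hTP s hsS
          have hxT : x ∈ T := by
            have : x = (s + x) - s := by ring
            rw [this]; exact sub_mem hzT hsT
          refine ⟨badIdeal hJ2 T hTP, ?_, (mem_badIdeal hJ2 T hTP x).mpr ⟨hxT, hx⟩⟩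
          rw [Finset.mem_image]
          exact ⟨⟨T, Finset.mem_filter.mpr ⟨hTC, hTP⟩⟩, Finset.mem_attach _ _, rfl⟩
    calc ringSigma (R ⧸ J) ≤ (D.card : ℕ∞) := sInf_le ⟨D, hDcover, rfl⟩
      _ ≤ (C.card : ℕ∞) := by
        exact_mod_cast le_trans Finset.card_image_le (Finset.card_filter_le _ _)
end

section
/- Let R be a finite ring of characteristic p with Jacobson radical J, J² = {0}, and R = S ⊕ J for a subring S. For s ∈ S and x ∈ J, conjugation satisfies (1+x)^{-1} s (1+x) = s + (sx − xs). Moreover, if x ∈ J satisfies (1+x)^{-1}S(1+x) = S, then x is central in R; and if additionally s ∈ Z(S), then conjugation by 1 + sx fixes S setwise. -/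
/-- Conjugation by `1 + x` for `x ∈ J` when `J² = 0` and `R = S ⊕ J`:
`(1+x)⁻¹ s (1+x) = s + (sx - xs)`; if conjugation by `1+x` fixes `S` setwise then
`x` is central in `R`, and then for `s ∈ Z(S)` conjugation by `1 + sx` also fixes
`S` setwise. -/
theorem stmt_18 {R : Type*} [Ring R] [Finite R] (p : ℕ) (hp : p.Prime) [CharP R p]
    (hJ2 : ∀ x ∈ Ideal.jacobson (⊥ : Ideal R), ∀ y ∈ Ideal.jacobson (⊥ : Ideal R), x * y = 0)
    (S : Subring R)
    (hdisj : ∀ x ∈ S, x ∈ Ideal.jacobson (⊥ : Ideal R) → x = 0)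
    (hsum : ∀ r : R, ∃ s ∈ S, r - s ∈ Ideal.jacobson (⊥ : Ideal R))
    (x : R) (hx : x ∈ Ideal.jacobson (⊥ : Ideal R))
    (u : Rˣ) (hu : (u : R) = 1 + x) :
    (∀ s ∈ S, (↑u⁻¹ : R) * s * u = s + (s * x - x * s)) ∧
      ((fun s : R => (↑u⁻¹ : R) * s * u) '' S = S →
        (∀ r : R, x * r = r * x) ∧
        ∀ s ∈ S, (∀ t ∈ S, s * t = t * s) →
          ∀ v : Rˣ, (v : R) = 1 + s * x →
            (fun t : R => (↑v⁻¹ : R) * t * v) '' S = S) := by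
  have key : ∀ y ∈ Ideal.jacobson (⊥ : Ideal R), ∀ w : Rˣ, (w : R) = 1 + y →
      ∀ s : R, (↑w⁻¹ : R) * s * w = s + (s * y - y * s) := by
    intro y hy w hw s
    have hyy : y * y = 0 := hJ2 y hy y hy
    have hinv : (↑w⁻¹ : R) = 1 - y := by
      have h1 : (w : R) * (1 - y) = 1 := by
        have e : (1 + y) * (1 - y) = 1 - y * y := by noncomm_ring
        rw [hw, e, hyy, sub_zero]
      calc (↑w⁻¹ : R) = ↑w⁻¹ * ((w : R) * (1 - y)) := by rw [h1, mul_one]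
        _ = 1 - y := by rw [← mul_assoc, Units.inv_mul, one_mul]
    have hysy : y * (s * y) = 0 :=
      hJ2 y hy (s * y) ((Ideal.jacobson ⊥).mul_mem_left s hy)
    have e : (1 - y) * s * (1 + y) = s + (s * y - y * s) - y * (s * y) := by noncomm_ring
    rw [hinv, hw, e, hysy, sub_zero]
  refine ⟨fun s _ => key x hx u hu s, fun hfix => ?_⟩
  have hcomm : ∀ s ∈ S, s * x = x * s := by
    intro s hs
    have hmem : (↑u⁻¹ : R) * s * u ∈ S := by
      have : (↑u⁻¹ : R) * s * u ∈ (fun s : R => (↑u⁻¹ : R) * s * u) '' S :=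
        Set.mem_image_of_mem _ hs
      rwa [hfix] at this
    rw [key x hx u hu s] at hmem
    have hS : s * x - x * s ∈ S := by
      have := S.sub_mem hmem hs
      simpa using this
    have hxs : x * s ∈ Ideal.jacobson (⊥ : Ideal R) := by
      rw [Ideal.mem_jacobson_iff]
      intro w
      refine ⟨1 - w * x * s, ?_⟩
      have hwx : w * x ∈ Ideal.jacobson (⊥ : Ideal R) :=
        (Ideal.jacobson ⊥).mul_mem_left w hx
      have h0 : (w * x) * (s * (w * x)) = 0 :=
        hJ2 _ hwx _ ((Ideal.jacobson ⊥).mul_mem_left s hwx)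
      rw [Ideal.mem_bot]
      have e : (1 - w * x * s) * w * (x * s) + (1 - w * x * s) - 1 =
          -((w * x) * (s * (w * x)) * s) := by noncomm_ring
      rw [e, h0, zero_mul, neg_zero]
    have hj : s * x - x * s ∈ Ideal.jacobson (⊥ : Ideal R) :=
      Ideal.sub_mem _ ((Ideal.jacobson ⊥).mul_mem_left s hx) hxs
    have h0 := hdisj _ hS hj
    exact sub_eq_zero.mp h0
  have hcent : ∀ r : R, x * r = r * x := by
    intro r
    obtain ⟨s, hs, hj⟩ := hsum r
    have h1 : x * (r - s) = 0 := hJ2 x hx _ hj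
    have h2 : (r - s) * x = 0 := hJ2 _ hj x hx
    have h3 := hcomm s hs
    have e1 : x * r = x * s + x * (r - s) := by noncomm_ring
    have e2 : r * x = s * x + (r - s) * x := by noncomm_ring
    rw [e1, e2, h1, h2, add_zero, add_zero, h3]
  refine ⟨hcent, fun s hs hc v hv => ?_⟩
  have hsx : s * x ∈ Ideal.jacobson (⊥ : Ideal R) := (Ideal.jacobson ⊥).mul_mem_left s hx
  have hid : ∀ t ∈ S, (↑v⁻¹ : R) * t * v = t := by
    intro t ht
    rw [key (s * x) hsx v hv t]
    have e1 : t * (s * x) = s * x * t := by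
      rw [← mul_assoc, ← hc t ht, mul_assoc, ← hcent t, ← mul_assoc]
    rw [e1, sub_self, add_zero]
  ext t
  constructor
  · rintro ⟨t', ht', rfl⟩
    simpa [hid t' ht'] using ht'
  · intro ht
    exact ⟨t, ht, hid t ht⟩
end
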